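/- arXiv:1708.05135 — 3 statements merged into one kernel-verified Lean document; each statement's English description precedes it below -/
import Mathlib

section
/- For every k ≥ 2, one has e_k BC_{k,k} e_k = e_k BC_{k−1,k−1}, where BC_{k−1,k−1} denotes the subalgebra of BC_{k,k} generated by e_1, s_1, …, s_{k−2}, s̄_1, …, s̄_{k−2}, c_1 and c̄_1. Moreover e_1 BC_{1,1} e_1 = 0. -/
open Polynomial

noncomputable section

/-- Transposition `(a b)` (0-based indices) in the symmetric group on `Fin n`;
it is `1` if an index is out of range. -/
def sw (n a b : ℕ) : Equiv.Perm (Fin n) :=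
  if h : a < n ∧ b < n then Equiv.swap ⟨a, h.1⟩ ⟨b, h.2⟩ else 1

/-- The permutation word `s_{i,j}` of the paper (1-based indices):
`s_{i,j} = s_i s_{i+1,j}` for `i < j`, `s_{i,i} = 1`, `s_{i,j} = s_{i,j+1} s_j` for `i > j`. -/
def sIJ (n i j : ℕ) : Equiv.Perm (Fin n) :=
  if i < j then ((List.range' i (j - i)).map (fun k => sw n (k - 1) k)).prod
  else ((List.range' j (i - j)).reverse.map (fun k => sw n (k - 1) k)).prod

/-- The coefficients `a_{2n+1,j}` of the paper: `acoef ω n j = a_{2n+1,j}`, defined by the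
recursion `a_{1,0} = -1`, `a_{2n+1,j+1} = a_{2n-1,j}` and
`a_{2n+1,0} = ∑_{j=0}^{n-1} a_{2n-1,j} ω_{2j+1}`. -/
def acoef {A : Type} [Ring A] (ω : ℕ → A) : ℕ → ℕ → A
  | 0, _ => -1
  | n + 1, 0 => ∑ j ∈ Finset.range (n + 1), acoef ω n j * ω (2 * j + 1)
  | n + 1, j + 1 => acoef ω n j

/-- The parameters `ω̄_k` determined by the parameters `ω` as in Corollary 3.5:
`ω̄_{2n} = 0` and `ω̄_{2n+1} = ∑_{j=0}^{n} a_{2n+1,j} ω_{2j+1}`. -/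
def obar {R : Type} [CommRing R] (ω : ℕ → R) (k : ℕ) : R :=
  if k % 2 = 0 then 0
  else ∑ j ∈ Finset.range (k / 2 + 1), acoef ω (k / 2) j * ω (2 * j + 1)

/-- Data for the presentation of the walled Brauer–Clifford superalgebra `BC_{r,t}`
(Definition 2.1 together with relations (2.1)–(2.3)) on an `R`-algebra `A`.
The images of the two symmetric groups are recorded as monoid homomorphisms, so the
symmetric group relations among the `s_i` (resp. `s̄_j`) hold automatically. -/
structure WBC (R A : Type) [CommRing R] [Ring A] [Algebra R A] (r t : ℕ) : Type where
  σ : Equiv.Perm (Fin r) →* A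
  σb : Equiv.Perm (Fin t) →* A
  c : Fin r → A
  cb : Fin t → A
  e : A
  c_sq : ∀ i, c i * c i = -1
  c_anti : ∀ i j, i ≠ j → c i * c j = -(c j * c i)
  c_conj : ∀ w i, σ w * c i * σ (w⁻¹) = c (w i)
  cb_sq : ∀ i, cb i * cb i = 1
  cb_anti : ∀ i j, i ≠ j → cb i * cb j = -(cb j * cb i)
  cb_conj : ∀ w i, σb w * cb i * σb (w⁻¹) = cb (w i)
  comm_σσb : ∀ w v, σ w * σb v = σb v * σ w
  comm_σcb : ∀ w j, σ w * cb j = cb j * σ w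
  comm_σbc : ∀ v i, σb v * c i = c i * σb v
  anti_ccb : ∀ i j, c i * cb j = -(cb j * c i)
  e_c1 : ∀ (h1 : 0 < r) (h2 : 0 < t), e * c ⟨0, h1⟩ = e * cb ⟨0, h2⟩
  c1_e : ∀ (h1 : 0 < r) (h2 : 0 < t), c ⟨0, h1⟩ * e = cb ⟨0, h2⟩ * e
  e_sq : e * e = 0
  e_s_e : 1 < r → e * σ (sw r 0 1) * e = e
  e_sb_e : 1 < t → e * σb (sw t 0 1) * e = e
  s_e_comm : ∀ i : ℕ, 0 < i → i + 1 < r → σ (sw r i (i + 1)) * e = e * σ (sw r i (i + 1))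
  sb_e_comm : ∀ j : ℕ, 0 < j → j + 1 < t → σb (sw t j (j + 1)) * e = e * σb (sw t j (j + 1))
  braid1 : 1 < r → 1 < t →
    e * σ (sw r 0 1) * σb (sw t 0 1) * e * σ (sw r 0 1)
      = e * σ (sw r 0 1) * σb (sw t 0 1) * e * σb (sw t 0 1)
  braid2 : 1 < r → 1 < t →
    σ (sw r 0 1) * e * σ (sw r 0 1) * σb (sw t 0 1) * e
      = σb (sw t 0 1) * e * σ (sw r 0 1) * σb (sw t 0 1) * e
  c_e_comm : ∀ i : Fin r, (i : ℕ) ≠ 0 → c i * e = e * c i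
  cb_e_comm : ∀ j : Fin t, (j : ℕ) ≠ 0 → cb j * e = e * cb j
  e_c_e : ∀ h : 0 < r, e * c ⟨0, h⟩ * e = 0
  e_cb_e : ∀ h : 0 < t, e * cb ⟨0, h⟩ * e = 0

namespace WBC

variable {R A : Type} [CommRing R] [Ring A] [Algebra R A] {r t : ℕ}

/-- The transposition `(i,j) ∈ Σ_r` (1-based indices). -/
def tr (d : WBC R A r t) (i j : ℕ) : A := d.σ (sw r (i - 1) (j - 1))

/-- The transposition `(ī,j̄) ∈ Σ_t` (1-based indices). -/
def trb (d : WBC R A r t) (i j : ℕ) : A := d.σb (sw t (i - 1) (j - 1))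

/-- The generator `s_j = (j, j+1)` (1-based). -/
def s (d : WBC R A r t) (j : ℕ) : A := d.σ (sw r (j - 1) j)

/-- The generator `s̄_j` (1-based). -/
def sb (d : WBC R A r t) (j : ℕ) : A := d.σb (sw t (j - 1) j)

/-- The generator `c_i` (1-based). -/
def cn (d : WBC R A r t) (i : ℕ) : A := if h : i - 1 < r then d.c ⟨i - 1, h⟩ else 0

/-- The generator `c̄_i` (1-based). -/
def cbn (d : WBC R A r t) (i : ℕ) : A := if h : i - 1 < t then d.cb ⟨i - 1, h⟩ else 0

/-- `e_{i,j} = (1̄,j̄)(1,i) e_1 (1,i)(1̄,j̄)` (1-based). -/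
def E (d : WBC R A r t) (i j : ℕ) : A := d.trb 1 j * d.tr 1 i * d.e * d.tr 1 i * d.trb 1 j

/-- `ē_{i,j} = c_i e_{i,j} c_i`. -/
def Eb (d : WBC R A r t) (i j : ℕ) : A := d.cn i * d.E i j * d.cn i

/-- `L'_i = ∑_{j=1}^{i-1} (j,i)`. -/
def LL (d : WBC R A r t) (i : ℕ) : A := ∑ j ∈ Finset.Ico 1 i, d.tr j i

/-- The Jucys–Murphy element `L_i = L'_i + c_i L'_i c_i`. -/
def L (d : WBC R A r t) (i : ℕ) : A := d.LL i + d.cn i * d.LL i * d.cn i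

/-- `L̄'_i = ∑_{j=1}^{i-1} (j̄,ī)`. -/
def LLb (d : WBC R A r t) (i : ℕ) : A := ∑ j ∈ Finset.Ico 1 i, d.trb j i

/-- The Jucys–Murphy element `L̄_i = L̄'_i - c̄_i L̄'_i c̄_i`. -/
def Lb (d : WBC R A r t) (i : ℕ) : A := d.LLb i - d.cbn i * d.LLb i * d.cbn i

/-- `y_i = ∑_{j=1}^{i-1} (e_{i,j} + ē_{i,j}) - L_i`. -/
def y (d : WBC R A r t) (i : ℕ) : A := (∑ j ∈ Finset.Ico 1 i, (d.E i j + d.Eb i j)) - d.L i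

/-- `ȳ_i = ∑_{j=1}^{i-1} (e_{j,i} - ē_{j,i}) - L̄_i`. -/
def yb (d : WBC R A r t) (i : ℕ) : A := (∑ j ∈ Finset.Ico 1 i, (d.E j i - d.Eb j i)) - d.Lb i

/-- `c^α = c_1^{α_1} ⋯ c_r^{α_r}`. -/
def cpow (d : WBC R A r t) (α : Fin r → Fin 2) : A :=
  ((List.finRange r).map (fun i => d.c i ^ (α i : ℕ))).prod

/-- `c̄^β = c̄_1^{β_1} ⋯ c̄_t^{β_t}`. -/
def cbpow (d : WBC R A r t) (β : Fin t → Fin 2) : A :=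
  ((List.finRange t).map (fun j => d.cb j ^ (β j : ℕ))).prod

/-- `e^f = e_1 e_2 ⋯ e_f`. -/
def epow (d : WBC R A r t) (f : ℕ) : A :=
  ((List.range f).map (fun i => d.E (i + 1) (i + 1))).prod

/-- Generators of the subalgebra `BC_{m,m}`: the elements `e_1`, `s_1, …, s_{m-1}`,
`s̄_1, …, s̄_{m-1}`, `c_1` and `c̄_1` (interpreted as `∅` when `m = 0`). -/
def lowerGens (d : WBC R A r t) (m : ℕ) : Set A :=
  {x | (1 ≤ m ∧ x = d.e) ∨ (∃ j : ℕ, 1 ≤ j ∧ j + 1 ≤ m ∧ x = d.s j)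
    ∨ (∃ j : ℕ, 1 ≤ j ∧ j + 1 ≤ m ∧ x = d.sb j)
    ∨ (1 ≤ m ∧ x = d.cn 1) ∨ (1 ≤ m ∧ x = d.cbn 1)}

end WBC

/-- `φ` intertwines two sets of walled Brauer–Clifford data. -/
structure WBCHom {R A B : Type} [CommRing R] [Ring A] [Algebra R A] [Ring B] [Algebra R B]
    {r t : ℕ} (d : WBC R A r t) (d' : WBC R B r t) (φ : A →ₐ[R] B) : Prop where
  map_σ : ∀ w, φ (d.σ w) = d'.σ w
  map_σb : ∀ w, φ (d.σb w) = d'.σb w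
  map_c : ∀ i, φ (d.c i) = d'.c i
  map_cb : ∀ j, φ (d.cb j) = d'.cb j
  map_e : φ d.e = d'.e

/-- `A` (with the data `d`) *is* the walled Brauer–Clifford superalgebra `BC_{r,t}`:
it is initial among all algebras with such data. -/
def WBC.IsUniversal {R A : Type} [CommRing R] [Ring A] [Algebra R A] {r t : ℕ}
    (d : WBC R A r t) : Prop :=
  ∀ (B : Type) [Ring B] [Algebra R B], ∀ d' : WBC R B r t, ∃! φ : A →ₐ[R] B, WBCHom d d' φ

/-- An element of `D^f_{r,t}`: data `1 ≤ i_1 < ⋯ < i_f ≤ r` and `k ≤ j_k ≤ t`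
(all 1-based) describing `s_{f,i_f} s̄_{f,j_f} ⋯ s_{1,i_1} s̄_{1,j_1}`. -/
structure DElt (r t f : ℕ) : Type where
  a : Fin f → ℕ
  b : Fin f → ℕ
  ha_mono : StrictMono a
  ha_lb : ∀ k, 1 ≤ a k
  ha_ub : ∀ k, a k ≤ r
  hb_lb : ∀ k : Fin f, (k : ℕ) + 1 ≤ b k
  hb_ub : ∀ k, b k ≤ t

/-- The `Σ_r`-component `s_{f,i_f} ⋯ s_{1,i_1}` of the element of `D^f_{r,t}`. -/
def DElt.pr {r t f : ℕ} (x : DElt r t f) : Equiv.Perm (Fin r) :=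
  ((List.finRange f).reverse.map (fun (k : Fin f) => sIJ r ((k : ℕ) + 1) (x.a k))).prod

/-- The `Σ_t`-component `s̄_{f,j_f} ⋯ s̄_{1,j_1}` of the element of `D^f_{r,t}`. -/
def DElt.pt {r t f : ℕ} (x : DElt r t f) : Equiv.Perm (Fin t) :=
  ((List.finRange f).reverse.map (fun (k : Fin f) => sIJ t ((k : ℕ) + 1) (x.b k))).prod

/-- Index for the basis `{c^α d_1⁻¹ e^f w d_2 c̄^β}` of `BC_{r,t}`; the component
`w ∈ Σ_{r-f} × Σ_{t-f}` is a pair of permutations fixing `1, …, f` pointwise. -/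
structure BCIndex (r t : ℕ) : Type where
  α : Fin r → Fin 2
  β : Fin t → Fin 2
  f : ℕ
  hf : f ≤ min r t
  d1 : DElt r t f
  d2 : DElt r t f
  w : Equiv.Perm (Fin r)
  wb : Equiv.Perm (Fin t)
  hw : ∀ i : Fin r, (i : ℕ) < f → w i = i
  hwb : ∀ j : Fin t, (j : ℕ) < f → wb j = j

/-- The basis element `c^α d_1⁻¹ e^f w d_2 c̄^β` of Theorem 2.4. -/
def WBC.basElt {R A : Type} [CommRing R] [Ring A] [Algebra R A] {r t : ℕ}
    (d : WBC R A r t) (x : BCIndex r t) : A :=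
  d.cpow x.α * d.σ (x.d1.pr⁻¹) * d.σb (x.d1.pt⁻¹) * d.epow x.f *
    d.σ x.w * d.σb x.wb * d.σ x.d2.pr * d.σb x.d2.pt * d.cbpow x.β

/-- Data for the presentation of the affine walled Brauer–Clifford superalgebra
`BC^aff_{r,t}` (Definition 3.1) with distinguished parameter `ω_1 ∈ R`.
`om k` is `ω_k` (with `ω_1` the scalar `ω1` and `ω_{2k} = 0`), `omb k` is `ω̄_k`. -/
structure AWBC (R A : Type) [CommRing R] [Ring A] [Algebra R A] (r t : ℕ) (ω1 : R)
    extends WBC R A r t : Type where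
  x1 : A
  xb1 : A
  om : ℕ → A
  omb : ℕ → A
  om_one : om 1 = algebraMap R A ω1
  om_even : ∀ k, om (2 * k) = 0
  omb_zero : omb 0 = 0
  om_comm : ∀ k, (∀ w, om k * σ w = σ w * om k) ∧ (∀ w, om k * σb w = σb w * om k) ∧
    (∀ i, om k * c i = c i * om k) ∧ (∀ j, om k * cb j = cb j * om k) ∧
    om k * e = e * om k ∧ om k * x1 = x1 * om k ∧ om k * xb1 = xb1 * om k ∧
    (∀ l, om k * om l = om l * om k) ∧ (∀ l, om k * omb l = omb l * om k)
  omb_comm : ∀ k, (∀ w, omb k * σ w = σ w * omb k) ∧ (∀ w, omb k * σb w = σb w * omb k) ∧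
    (∀ i, omb k * c i = c i * omb k) ∧ (∀ j, omb k * cb j = cb j * omb k) ∧
    omb k * e = e * omb k ∧ omb k * x1 = x1 * omb k ∧ omb k * xb1 = xb1 * omb k ∧
    (∀ l, omb k * omb l = omb l * omb k)
  x_comm : ∀ h : 1 < r, x1 * (σ (sw r 0 1) * x1 * σ (sw r 0 1)
      - (1 - c ⟨0, by omega⟩ * c ⟨1, h⟩) * σ (sw r 0 1))
    = (σ (sw r 0 1) * x1 * σ (sw r 0 1)
      - (1 - c ⟨0, by omega⟩ * c ⟨1, h⟩) * σ (sw r 0 1)) * x1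
  x1_c1 : ∀ h : 0 < r, x1 * c ⟨0, h⟩ = -(c ⟨0, h⟩ * x1)
  x1_c : ∀ i : Fin r, (i : ℕ) ≠ 0 → x1 * c i = c i * x1
  s_x1 : ∀ i : ℕ, 0 < i → i + 1 < r → σ (sw r i (i + 1)) * x1 = x1 * σ (sw r i (i + 1))
  xb_comm : ∀ h : 1 < t, xb1 * (σb (sw t 0 1) * xb1 * σb (sw t 0 1)
      - (1 + cb ⟨0, by omega⟩ * cb ⟨1, h⟩) * σb (sw t 0 1))
    = (σb (sw t 0 1) * xb1 * σb (sw t 0 1)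
      - (1 + cb ⟨0, by omega⟩ * cb ⟨1, h⟩) * σb (sw t 0 1)) * xb1
  xb1_cb1 : ∀ h : 0 < t, xb1 * cb ⟨0, h⟩ = -(cb ⟨0, h⟩ * xb1)
  xb1_cb : ∀ j : Fin t, (j : ℕ) ≠ 0 → xb1 * cb j = cb j * xb1
  sb_xb1 : ∀ j : ℕ, 0 < j → j + 1 < t → σb (sw t j (j + 1)) * xb1 = xb1 * σb (sw t j (j + 1))
  e_xsum : e * (x1 + xb1) = 0
  xsum_e : (x1 + xb1) * e = 0
  e_sxs : 1 < r → e * (σ (sw r 0 1) * x1 * σ (sw r 0 1)) = (σ (sw r 0 1) * x1 * σ (sw r 0 1)) * e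
  x_mixed : ∀ h : 0 < r, x1 * (e + xb1 - c ⟨0, h⟩ * e * c ⟨0, h⟩)
      = (e - c ⟨0, h⟩ * e * c ⟨0, h⟩ + xb1) * x1
  e_sbxbsb : 1 < t →
    e * (σb (sw t 0 1) * xb1 * σb (sw t 0 1)) = (σb (sw t 0 1) * xb1 * σb (sw t 0 1)) * e
  e_xodd : ∀ k : ℕ, e * x1 ^ (2 * k + 1) * e = om (2 * k + 1) * e
  e_xeven : ∀ k : ℕ, 1 ≤ k → e * x1 ^ (2 * k) * e = 0
  e_xb : ∀ k : ℕ, 1 ≤ k → e * xb1 ^ k * e = omb k * e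
  x1_cb_comm : ∀ j, x1 * cb j = cb j * x1
  xb1_c_comm : ∀ i, xb1 * c i = c i * xb1
  x1_σb : ∀ w, σb w * x1 = x1 * σb w
  xb1_σ : ∀ w, σ w * xb1 = xb1 * σ w

namespace AWBC

variable {R A : Type} [CommRing R] [Ring A] [Algebra R A] {r t : ℕ} {ω1 : R}

/-- `x'_i = s_{i-1} ⋯ s_1 x_1 s_1 ⋯ s_{i-1}` (1-based). -/
def xp (d : AWBC R A r t ω1) (i : ℕ) : A :=
  ((List.range (i - 1)).reverse.map (fun k => d.toWBC.s (k + 1))).prod * d.x1 *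
    ((List.range (i - 1)).map (fun k => d.toWBC.s (k + 1))).prod

/-- `x̄'_j = s̄_{j-1} ⋯ s̄_1 x̄_1 s̄_1 ⋯ s̄_{j-1}` (1-based). -/
def xbp (d : AWBC R A r t ω1) (j : ℕ) : A :=
  ((List.range (j - 1)).reverse.map (fun k => d.toWBC.sb (k + 1))).prod * d.xb1 *
    ((List.range (j - 1)).map (fun k => d.toWBC.sb (k + 1))).prod

/-- `x_i = x'_i - L_i`. -/
def xv (d : AWBC R A r t ω1) (i : ℕ) : A := d.xp i - d.toWBC.L i

/-- `x̄_j = x̄'_j - L̄_j`. -/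
def xbv (d : AWBC R A r t ω1) (j : ℕ) : A := d.xbp j - d.toWBC.Lb j

/-- `x^α = x_1^{α_1} ⋯ x_r^{α_r}`. -/
def xpow (d : AWBC R A r t ω1) (α : Fin r → ℕ) : A :=
  ((List.finRange r).map (fun (i : Fin r) => d.xv ((i : ℕ) + 1) ^ α i)).prod

/-- `x̄^β = x̄_1^{β_1} ⋯ x̄_t^{β_t}`. -/
def xbpow (d : AWBC R A r t ω1) (β : Fin t → ℕ) : A :=
  ((List.finRange t).map (fun (j : Fin t) => d.xbv ((j : ℕ) + 1) ^ β j)).prod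

/-- `∏_{n ∈ ℤ^{>0}} ω_{2n+1}^{a_{2n+1}}`, where `g i` is the exponent of `ω_{2(i+1)+1}`. -/
def ompow (d : AWBC R A r t ω1) (g : ℕ →₀ ℕ) : A :=
  ((g.support.sort (· ≤ ·)).map (fun n => d.om (2 * n + 3) ^ g n)).prod

/-- `z_i = x'_i + y_i`. -/
def z (d : AWBC R A r t ω1) (i : ℕ) : A := d.xp i + d.toWBC.y i

/-- `z̄_j = x̄'_j + ȳ_j`. -/
def zb (d : AWBC R A r t ω1) (j : ℕ) : A := d.xbp j + d.toWBC.yb j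

/-- Generators of the subalgebra `BC_{2,m,m}`-type subalgebra:
`e_1, s_1, …, s_{m-1}, s̄_1, …, s̄_{m-1}, c_1, c̄_1, x_1, x̄_1`. -/
def lowerGensA (d : AWBC R A r t ω1) (m : ℕ) : Set A :=
  d.toWBC.lowerGens m ∪ {x | 1 ≤ m ∧ (x = d.x1 ∨ x = d.xb1)}

end AWBC

/-- `φ` intertwines two sets of affine walled Brauer–Clifford data. -/
structure AWBCHom {R A B : Type} [CommRing R] [Ring A] [Algebra R A] [Ring B] [Algebra R B]
    {r t : ℕ} {ω1 : R} (d : AWBC R A r t ω1) (d' : AWBC R B r t ω1) (φ : A →ₐ[R] B) : Prop where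
  map_σ : ∀ w, φ (d.σ w) = d'.σ w
  map_σb : ∀ w, φ (d.σb w) = d'.σb w
  map_c : ∀ i, φ (d.c i) = d'.c i
  map_cb : ∀ j, φ (d.cb j) = d'.cb j
  map_e : φ d.e = d'.e
  map_x1 : φ d.x1 = d'.x1
  map_xb1 : φ d.xb1 = d'.xb1
  map_om : ∀ k, φ (d.om k) = d'.om k
  map_omb : ∀ k, φ (d.omb k) = d'.omb k

/-- `A` (with the data `d`) is the affine walled Brauer–Clifford superalgebra
`BC^aff_{r,t}` of Definition 3.1. -/
def AWBC.IsUniversal {R A : Type} [CommRing R] [Ring A] [Algebra R A] {r t : ℕ} {ω1 : R}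
    (d : AWBC R A r t ω1) : Prop :=
  ∀ (B : Type) [Ring B] [Algebra R B], ∀ d' : AWBC R B r t ω1,
    ∃! φ : A →ₐ[R] B, AWBCHom d d' φ

/-- Assumption 3.6: the parameters `ω̄` are determined by the `ω`'s as in Corollary 3.5. -/
def AWBC.Ass36 {R A : Type} [CommRing R] [Ring A] [Algebra R A] {r t : ℕ} {ω1 : R}
    (d : AWBC R A r t ω1) : Prop :=
  (∀ n, d.omb (2 * n) = 0) ∧
  (∀ n, d.omb (2 * n + 1) = ∑ j ∈ Finset.range (n + 1), acoef d.om n j * d.om (2 * j + 1))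

/-- `A` (with the data `d`) is the affine walled Brauer–Clifford superalgebra
`BC^aff_{r,t}` subject to Assumption 3.6. -/
def AWBC.IsUniversal36 {R A : Type} [CommRing R] [Ring A] [Algebra R A] {r t : ℕ} {ω1 : R}
    (d : AWBC R A r t ω1) : Prop :=
  d.Ass36 ∧ ∀ (B : Type) [Ring B] [Algebra R B], ∀ d' : AWBC R B r t ω1,
    d'.Ass36 → ∃! φ : A →ₐ[R] B, AWBCHom d d' φ

/-- The parameters `ω_k`, `ω̄_k` are the scalars `ω k`, `obar ω k` (specialization defining
the algebra `B̃C_{r,t}` of Definition 3.13). -/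
def AWBC.IsSpec {R A : Type} [CommRing R] [Ring A] [Algebra R A] {r t : ℕ} {ω1 : R}
    (d : AWBC R A r t ω1) (ω : ℕ → R) : Prop :=
  (∀ k, d.om k = algebraMap R A (ω k)) ∧ (∀ k, 1 ≤ k → d.omb k = algebraMap R A (obar ω k))

/-- `A` (with the data `d`) is the algebra `B̃C_{r,t}` of Definition 3.13 with parameters
`ω_{2n+1} ∈ R`. -/
def AWBC.IsSpecUniversal {R A : Type} [CommRing R] [Ring A] [Algebra R A] {r t : ℕ} {ω1 : R}
    (d : AWBC R A r t ω1) (ω : ℕ → R) : Prop :=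
  d.IsSpec ω ∧ ∀ (B : Type) [Ring B] [Algebra R B], ∀ d' : AWBC R B r t ω1,
    d'.IsSpec ω → ∃! φ : A →ₐ[R] B, AWBCHom d d' φ

/-- The cyclotomic relations `f(x_1) = 0` and `g(x̄_1) = 0`. -/
def AWBC.IsCyc {R A : Type} [CommRing R] [Ring A] [Algebra R A] {r t : ℕ} {ω1 : R}
    (d : AWBC R A r t ω1) (f g : Polynomial R) : Prop :=
  Polynomial.aeval d.x1 f = 0 ∧ Polynomial.aeval d.xb1 g = 0

/-- `A` (with the data `d`) is the cyclotomic walled Brauer–Clifford superalgebra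
`BC_{ℓ,r,t}` of Definition 3.14 attached to `f`, `g` and the scalar parameters `ω`. -/
def AWBC.IsCycUniversal {R A : Type} [CommRing R] [Ring A] [Algebra R A] {r t : ℕ} {ω1 : R}
    (d : AWBC R A r t ω1) (ω : ℕ → R) (f g : Polynomial R) : Prop :=
  d.IsSpec ω ∧ d.IsCyc f g ∧ ∀ (B : Type) [Ring B] [Algebra R B], ∀ d' : AWBC R B r t ω1,
    d'.IsSpec ω → d'.IsCyc f g → ∃! φ : A →ₐ[R] B, AWBCHom d d' φ

/-- Index of a regular monomial `x^α d x̄^β ∏_{n≥1} ω_{2n+1}^{a_{2n+1}}` of `BC^aff_{r,t}`. -/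
structure ARIndex (r t : ℕ) : Type where
  α : Fin r → ℕ
  β : Fin t → ℕ
  dIdx : BCIndex r t
  g : ℕ →₀ ℕ

/-- The regular monomial `x^α d x̄^β ∏_{n≥1} ω_{2n+1}^{a_{2n+1}}` of Definition 3.11. -/
def AWBC.regElt {R A : Type} [CommRing R] [Ring A] [Algebra R A] {r t : ℕ} {ω1 : R}
    (d : AWBC R A r t ω1) (x : ARIndex r t) : A :=
  d.xpow x.α * d.toWBC.basElt x.dIdx * d.xbpow x.β * d.ompow x.g

/-- Index of a regular monomial `x^α d x̄^β` of `B̃C_{r,t}`. -/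
structure SIndex (r t : ℕ) : Type where
  α : Fin r → ℕ
  β : Fin t → ℕ
  dIdx : BCIndex r t

/-- The regular monomial `x^α d x̄^β` of `B̃C_{r,t}`. -/
def AWBC.sregElt {R A : Type} [CommRing R] [Ring A] [Algebra R A] {r t : ℕ} {ω1 : R}
    (d : AWBC R A r t ω1) (x : SIndex r t) : A :=
  d.xpow x.α * d.toWBC.basElt x.dIdx * d.xbpow x.β

/-- Index of a regular monomial `x^α d x̄^β` of the level `ℓ` algebra `BC_{ℓ,r,t}`,
with exponents in `{0, 1, …, ℓ-1}`. -/
structure CIndex (r t ℓ : ℕ) : Type where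
  α : Fin r → Fin ℓ
  β : Fin t → Fin ℓ
  dIdx : BCIndex r t

/-- The regular monomial `x^α d x̄^β` of `BC_{ℓ,r,t}`. -/
def AWBC.cregElt {R A : Type} [CommRing R] [Ring A] [Algebra R A] {r t ℓ : ℕ} {ω1 : R}
    (d : AWBC R A r t ω1) (x : CIndex r t ℓ) : A :=
  d.xpow (fun i => (x.α i : ℕ)) * d.toWBC.basElt x.dIdx * d.xbpow (fun j => (x.β j : ℕ))

/-- Admissibility (Definition 6.4): writing `f(x) = x^{k+2m} + ∑_{i=1}^{2m} a_i x^{k+2m-i}`,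
one has `ω_L = -(a_1 ω_{L-1} + ⋯ + a_{2m} ω_{L-2m})` for all `L ≥ k + 2m`. -/
def AdmissibleParam {R : Type} [CommRing R] (ω : ℕ → R) (f : Polynomial R) (k m : ℕ) : Prop :=
  ∀ L, k + 2 * m ≤ L →
    ω L = -∑ i ∈ Finset.Icc 1 (2 * m), f.coeff (k + 2 * m - i) * ω (L - i)

/-- The parameters `ω_0 = 0`, `ω_1 = -2m(2p-2m+1)`, `ω_i = p(p+1) ω_{i-2}` of (4.16). -/
def omSeq (m : ℕ) (p : ℂ) : ℕ → ℂ
  | 0 => 0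
  | 1 => -2 * (m : ℂ) * (2 * p - 2 * (m : ℂ) + 1)
  | n + 2 => p * (p + 1) * omSeq m p n

/-- Index of a monomial `d_1^{-1} c^α x'^β e^f x̄'^{β̄} c̄^{ᾱ} w d_2` of (4.20). -/
structure L2Index (r t : ℕ) : Type where
  α : Fin r → Fin 2
  βx : Fin r → Fin 2
  αb : Fin t → Fin 2
  βxb : Fin t → Fin 2
  f : ℕ
  hf : f ≤ min r t
  d1 : DElt r t f
  d2 : DElt r t f
  w : Equiv.Perm (Fin r)
  wb : Equiv.Perm (Fin t)
  hw : ∀ i : Fin r, (i : ℕ) < f → w i = i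
  hwb : ∀ j : Fin t, (j : ℕ) < f → wb j = j

/-- The monomial `d_1^{-1} c^α x'^β e^f x̄'^{β̄} c̄^{ᾱ} w d_2` of (4.20), where
`x'^β = x'_r{}^{β_r} ⋯ x'_1{}^{β_1}` and `x̄'^{β̄} = x̄'_t{}^{β̄_t} ⋯ x̄'_1{}^{β̄_1}`. -/
def AWBC.l2Elt {R A : Type} [CommRing R] [Ring A] [Algebra R A] {r t : ℕ} {ω1 : R}
    (d : AWBC R A r t ω1) (x : L2Index r t) : A :=
  d.toWBC.σ (x.d1.pr⁻¹) * d.toWBC.σb (x.d1.pt⁻¹) * d.toWBC.cpow x.α *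
    ((List.finRange r).reverse.map (fun (i : Fin r) => d.xp ((i : ℕ) + 1) ^ (x.βx i : ℕ))).prod *
    d.toWBC.epow x.f *
    ((List.finRange t).reverse.map (fun (j : Fin t) => d.xbp ((j : ℕ) + 1) ^ (x.βxb j : ℕ))).prod *
    d.toWBC.cbpow x.αb *
    d.toWBC.σ x.w * d.toWBC.σb x.wb * d.toWBC.σ x.d2.pr * d.toWBC.σb x.d2.pt

/-!
For `k = 1`, the span of `e` and `c₁ e` is stable under left multiplication by the generators and
is killed by left multiplication with `e`, so `e a e = 0`.

For `k = m + 2` let `E = e_k` and let `L` be the subalgebra generated by `e_1`, `s_1, …, s_{k-2}`,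
`s̄_1, …, s̄_{k-2}`, `c_1`, `c̄_1`. Conjugation by `σ(u) σ̄(v)` is a ring automorphism, and `E`
is the conjugate of `e_1` by `σ(τ) σ̄(τ)`, `τ = (1, k)`. Transporting the relations of `e_1`
shows that `L` commutes with `E`, that `E (i,k) E = E = E (ī,k̄) E` for `i < k`, and (from the
braid relations) that `E (i,k)(j̄,k̄) E = e_{i,j} E`. Hence `E c̄_k^b σ(w) σ̄(v) E ∈ L E` for all
`b, w, v`, and multiplying `E c̄_k^b σ(w) σ̄(v)` on the right by a generator gives
`l E c̄_k^{b'} σ(w') σ̄(v')` with `l ∈ L` (for the generator `e`, write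
`e = σ(τ) σ̄(τ) E σ(τ) σ̄(τ)`). Induction over words gives `E a E ∈ L E = E L`; conversely
`E b = E (1,k) E b = E ((1,k) b) E` for `b ∈ L`.
-/

open Equiv

theorem mul_mem_of_mem_adjoin {R A : Type*} [CommSemiring R] [Semiring A] [Algebra R A] {s : Set A}
    {M : Submodule R A} (hs : ∀ g ∈ s, ∀ x ∈ M, g * x ∈ M) {a : A}
    (ha : a ∈ Algebra.adjoin R s) : ∀ x ∈ M, a * x ∈ M := by
  induction ha using Algebra.adjoin_induction with
  | mem g hg => exact hs g hg
  | algebraMap r => exact fun x hx => by rw [← Algebra.smul_def]; exact M.smul_mem r hx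
  | add a b _ _ ha hb => exact fun x hx => by rw [add_mul]; exact M.add_mem (ha x hx) (hb x hx)
  | mul a b _ _ ha hb => exact fun x hx => by rw [mul_assoc]; exact ha _ (hb x hx)

theorem mul_mul_eq_mul_mul {A : Type*} [Semigroup A] {a b c d : A} (h : a * b = c * d) (z : A) :
    a * (b * z) = c * (d * z) := by
  rw [← mul_assoc, h, mul_assoc]

theorem pow_mul_eq_neg_one_pow_mul_mul {A : Type*} [Ring A] {a x : A} (h : a * x = -(x * a))
    (n : ℕ) : a ^ n * x = (-1) ^ n * x * a ^ n := by
  induction n with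
  | zero => simp
  | succ n ih => rw [pow_succ, mul_assoc, h, mul_neg, ← mul_assoc, ih]; noncomm_ring

theorem sw_eq {n a b : ℕ} (ha : a < n) (hb : b < n) :
    sw n a b = swap ⟨a, ha⟩ ⟨b, hb⟩ := by
  rw [sw, dif_pos ⟨ha, hb⟩]

def adjSwaps (n lo hi : ℕ) : Set (Perm (Fin n)) :=
  {g | ∃ i, lo ≤ i ∧ i + 1 ≤ hi ∧ g = sw n i (i + 1)}

theorem swap_mem_closure_adjSwaps {n lo hi : ℕ} {a b : Fin n} (ha : lo ≤ a) (hab : a < b)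
    (hb : (b : ℕ) ≤ hi) : swap a b ∈ Submonoid.closure (adjSwaps n lo hi) := by
  obtain ⟨k, hk⟩ : ∃ k, (b : ℕ) = a + k + 1 := ⟨b - a - 1, by omega⟩
  induction k generalizing b with
  | zero =>
    refine Submonoid.subset_closure ⟨a, ha, by omega, ?_⟩
    rw [sw_eq a.2 (by omega)]
    congr
    exact Fin.ext hk
  | succ k ih =>
    let c : Fin n := ⟨b - 1, by omega⟩
    have hcv : (c : ℕ) = b - 1 := rfl
    have hc : swap c b ∈ Submonoid.closure (adjSwaps n lo hi) := by
      refine Submonoid.subset_closure ⟨c, by omega, by omega, ?_⟩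
      rw [sw_eq c.2 (by omega)]
      congr
      exact Fin.ext (by dsimp only; omega)
    have hac : a ≠ c := fun h => by rw [Fin.ext_iff] at h; omega
    rw [swap_comm a b, ← swap_mul_swap_mul_swap hac hab.ne]
    exact mul_mem (mul_mem hc (ih (Fin.lt_def.mpr (by omega)) (by omega) (by omega))) hc

theorem mem_closure_adjSwaps {n lo hi : ℕ} (w : Perm (Fin n))
    (hw : ∀ x : Fin n, w x ≠ x → lo ≤ x ∧ (x : ℕ) ≤ hi) :
    w ∈ Submonoid.closure (adjSwaps n lo hi) := by
  let p : Fin n → Prop := fun x => lo ≤ x ∧ (x : ℕ) ≤ hi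
  have hp : ∀ x, p (w x) ↔ p x := fun x => by
    by_cases hx : w x = x
    · rw [hx]
    · exact iff_of_true (hw (w x) fun h => hx (w.injective h)) (hw x hx)
  rw [← Perm.ofSubtype_subtypePerm hp hw]
  have hs : w.subtypePerm hp ∈ Submonoid.closure {σ : Perm (Subtype p) | σ.IsSwap} := by
    rw [Perm.mclosure_isSwap]; trivial
  have hmap := Submonoid.mem_map_of_mem (Perm.ofSubtype : Perm (Subtype p) →* Perm (Fin n)) hs
  rw [MonoidHom.map_mclosure] at hmap
  refine Submonoid.closure_le.mpr ?_ hmap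
  rintro _ ⟨_, ⟨x, y, hxy, rfl⟩, rfl⟩
  rw [SetLike.mem_coe, Perm.ofSubtype_swap_eq]
  rcases lt_or_gt_of_ne (Subtype.coe_ne_coe.mpr hxy) with h | h
  · exact swap_mem_closure_adjSwaps x.2.1 h y.2.2
  · rw [swap_comm]
    exact swap_mem_closure_adjSwaps y.2.1 h x.2.2

theorem map_mem_of_adjSwaps {M : Type*} [Monoid M] {n lo hi : ℕ} (f : Perm (Fin n) →* M)
    {S : Submonoid M} (hS : ∀ i, lo ≤ i → i + 1 ≤ hi → f (sw n i (i + 1)) ∈ S)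
    (w : Perm (Fin n)) (hw : ∀ x : Fin n, w x ≠ x → lo ≤ x ∧ (x : ℕ) ≤ hi) :
    f w ∈ S := by
  refine (Submonoid.closure_le (S := S.comap f)).mpr ?_ (mem_closure_adjSwaps w hw)
  rintro _ ⟨i, h1, h2, rfl⟩
  exact hS i h1 h2

namespace WBC

variable {R A : Type} [CommRing R] [Ring A] [Algebra R A]

section General

variable {r t : ℕ} (d : WBC R A r t)

def gens : Set A :=
  Set.range d.σ ∪ Set.range d.σb ∪ Set.range d.c ∪ Set.range d.cb ∪ {d.e}

theorem σ_mem_gens (w : Perm (Fin r)) : d.σ w ∈ d.gens :=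
  Or.inl (Or.inl (Or.inl (Or.inl ⟨w, rfl⟩)))

theorem σb_mem_gens (w : Perm (Fin t)) : d.σb w ∈ d.gens :=
  Or.inl (Or.inl (Or.inl (Or.inr ⟨w, rfl⟩)))

theorem c_mem_gens (i : Fin r) : d.c i ∈ d.gens := Or.inl (Or.inl (Or.inr ⟨i, rfl⟩))

theorem cb_mem_gens (j : Fin t) : d.cb j ∈ d.gens := Or.inl (Or.inr ⟨j, rfl⟩)

theorem e_mem_gens : d.e ∈ d.gens := Or.inr rfl

def restrict : WBC R (Algebra.adjoin R d.gens) r t where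
  σ := (d.σ.codRestrict (Algebra.adjoin R d.gens).toSubmonoid
    fun w => Algebra.subset_adjoin (d.σ_mem_gens w))
  σb := (d.σb.codRestrict (Algebra.adjoin R d.gens).toSubmonoid
    fun w => Algebra.subset_adjoin (d.σb_mem_gens w))
  c i := ⟨d.c i, Algebra.subset_adjoin (d.c_mem_gens i)⟩
  cb j := ⟨d.cb j, Algebra.subset_adjoin (d.cb_mem_gens j)⟩
  e := ⟨d.e, Algebra.subset_adjoin d.e_mem_gens⟩
  c_sq i := Subtype.ext (d.c_sq i)
  c_anti i j h := Subtype.ext (d.c_anti i j h)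
  c_conj w i := Subtype.ext (d.c_conj w i)
  cb_sq i := Subtype.ext (d.cb_sq i)
  cb_anti i j h := Subtype.ext (d.cb_anti i j h)
  cb_conj w i := Subtype.ext (d.cb_conj w i)
  comm_σσb w v := Subtype.ext (d.comm_σσb w v)
  comm_σcb w j := Subtype.ext (d.comm_σcb w j)
  comm_σbc v i := Subtype.ext (d.comm_σbc v i)
  anti_ccb i j := Subtype.ext (d.anti_ccb i j)
  e_c1 h1 h2 := Subtype.ext (d.e_c1 h1 h2)
  c1_e h1 h2 := Subtype.ext (d.c1_e h1 h2)
  e_sq := Subtype.ext d.e_sq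
  e_s_e h := Subtype.ext (d.e_s_e h)
  e_sb_e h := Subtype.ext (d.e_sb_e h)
  s_e_comm i h1 h2 := Subtype.ext (d.s_e_comm i h1 h2)
  sb_e_comm j h1 h2 := Subtype.ext (d.sb_e_comm j h1 h2)
  braid1 h1 h2 := Subtype.ext (d.braid1 h1 h2)
  braid2 h1 h2 := Subtype.ext (d.braid2 h1 h2)
  c_e_comm i h := Subtype.ext (d.c_e_comm i h)
  cb_e_comm j h := Subtype.ext (d.cb_e_comm j h)
  e_c_e h := Subtype.ext (d.e_c_e h)
  e_cb_e h := Subtype.ext (d.e_cb_e h)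

theorem adjoin_gens_eq_top (hu : d.IsUniversal) : Algebra.adjoin R d.gens = ⊤ := by
  obtain ⟨φ, hφ, -⟩ := hu _ d.restrict
  obtain ⟨_, -, huniq⟩ := hu A d
  let ψ := (Algebra.adjoin R d.gens).val.comp φ
  have hψ : WBCHom d d ψ :=
    ⟨fun w => congrArg Subtype.val (hφ.map_σ w), fun w => congrArg Subtype.val (hφ.map_σb w),
      fun i => congrArg Subtype.val (hφ.map_c i), fun j => congrArg Subtype.val (hφ.map_cb j),
      congrArg Subtype.val hφ.map_e⟩
  have hid : WBCHom d d (AlgHom.id R A) :=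
    ⟨fun _ => rfl, fun _ => rfl, fun _ => rfl, fun _ => rfl, rfl⟩
  have hψid : ψ = AlgHom.id R A := (huniq ψ hψ).trans (huniq _ hid).symm
  refine eq_top_iff.mpr fun a _ => ?_
  rw [← AlgHom.id_apply (R := R) a, ← hψid]
  exact (φ a).2

theorem mul_mem_of_gens_mul_mem (hu : d.IsUniversal) {M : Submodule R A}
    (hM : ∀ g ∈ d.gens, ∀ x ∈ M, g * x ∈ M) (a : A) : ∀ x ∈ M, a * x ∈ M :=
  mul_mem_of_mem_adjoin hM (by rw [d.adjoin_gens_eq_top hu]; trivial)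

theorem σ_mul_σ (w w' : Perm (Fin r)) : d.σ w * d.σ w' = d.σ (w * w') := (map_mul ..).symm

theorem σ_mul_σ_mul (w w' : Perm (Fin r)) (z : A) :
    d.σ w * (d.σ w' * z) = d.σ (w * w') * z := by
  rw [← mul_assoc, σ_mul_σ]

theorem σb_mul_σb (v v' : Perm (Fin t)) : d.σb v * d.σb v' = d.σb (v * v') := (map_mul ..).symm

theorem σb_mul_σb_mul (v v' : Perm (Fin t)) (z : A) :
    d.σb v * (d.σb v' * z) = d.σb (v * v') * z := by
  rw [← mul_assoc, σb_mul_σb]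

theorem σb_mul_σ (v : Perm (Fin t)) (w : Perm (Fin r)) : d.σb v * d.σ w = d.σ w * d.σb v :=
  (d.comm_σσb w v).symm

theorem σb_mul_σ_mul (v : Perm (Fin t)) (w : Perm (Fin r)) (z : A) :
    d.σb v * (d.σ w * z) = d.σ w * (d.σb v * z) :=
  mul_mul_eq_mul_mul (d.σb_mul_σ v w) z

theorem σ_mul_c (w : Perm (Fin r)) (i : Fin r) : d.σ w * d.c i = d.c (w i) * d.σ w := by
  rw [← d.c_conj w i, mul_assoc _ (d.σ w⁻¹), σ_mul_σ, inv_mul_cancel, map_one, mul_one]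

theorem σb_mul_cb (w : Perm (Fin t)) (j : Fin t) : d.σb w * d.cb j = d.cb (w j) * d.σb w := by
  rw [← d.cb_conj w j, mul_assoc _ (d.σb w⁻¹), σb_mul_σb, inv_mul_cancel, map_one, mul_one]

theorem σ_mul_c_mul (w : Perm (Fin r)) (i : Fin r) (z : A) :
    d.σ w * (d.c i * z) = d.c (w i) * (d.σ w * z) :=
  mul_mul_eq_mul_mul (d.σ_mul_c w i) z

theorem σb_mul_cb_mul (w : Perm (Fin t)) (j : Fin t) (z : A) :
    d.σb w * (d.cb j * z) = d.cb (w j) * (d.σb w * z) :=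
  mul_mul_eq_mul_mul (d.σb_mul_cb w j) z

theorem σb_mul_c_mul (v : Perm (Fin t)) (i : Fin r) (z : A) :
    d.σb v * (d.c i * z) = d.c i * (d.σb v * z) :=
  mul_mul_eq_mul_mul (d.comm_σbc v i) z

theorem σ_mul_cb_mul (w : Perm (Fin r)) (j : Fin t) (z : A) :
    d.σ w * (d.cb j * z) = d.cb j * (d.σ w * z) :=
  mul_mul_eq_mul_mul (d.comm_σcb w j) z

theorem cb_pow (j : Fin t) (b : ℕ) : d.cb j ^ b = d.cb j ^ (b % 2) := by
  conv_lhs => rw [← Nat.div_add_mod b 2, pow_add, pow_mul, sq, d.cb_sq, one_pow, one_mul]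

def permUnit (u : Perm (Fin r)) (v : Perm (Fin t)) : Aˣ where
  val := d.σ u * d.σb v
  inv := d.σ u⁻¹ * d.σb v⁻¹
  val_inv := by
    simp only [mul_assoc, σb_mul_σ_mul, σ_mul_σ_mul, σb_mul_σb, mul_inv_cancel, map_one,
      one_mul]
  inv_val := by
    simp only [mul_assoc, σb_mul_σ_mul, σ_mul_σ_mul, σb_mul_σb, inv_mul_cancel, map_one,
      one_mul]

theorem perm_mul_perm_inv (u : Perm (Fin r)) (v : Perm (Fin t)) :
    d.σ u * d.σb v * (d.σ u⁻¹ * d.σb v⁻¹) = 1 :=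
  (d.permUnit u v).mul_inv

def conj (u : Perm (Fin r)) (v : Perm (Fin t)) : A →+* A :=
  MulSemiringAction.toRingHom (ConjAct Aˣ) A (ConjAct.toConjAct (d.permUnit u v))

theorem conj_apply (u : Perm (Fin r)) (v : Perm (Fin t)) (x : A) :
    d.conj u v x = d.σ u * d.σb v * x * (d.σ u⁻¹ * d.σb v⁻¹) := rfl

theorem permUnit_mul (u u' : Perm (Fin r)) (v v' : Perm (Fin t)) :
    d.permUnit u v * d.permUnit u' v' = d.permUnit (u * u') (v * v') :=
  Units.ext (by
    simp only [permUnit, Units.val_mul, mul_assoc, σb_mul_σ_mul, σ_mul_σ_mul, σb_mul_σb])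

theorem conj_conj (u u' : Perm (Fin r)) (v v' : Perm (Fin t)) (x : A) :
    d.conj u v (d.conj u' v' x) = d.conj (u * u') (v * v') x := by
  simp only [conj, MulSemiringAction.toRingHom_apply, smul_smul, ← map_mul, permUnit_mul]

theorem conj_mul_perm (u : Perm (Fin r)) (v : Perm (Fin t)) (x : A) :
    d.conj u v x * (d.σ u * d.σb v) = d.σ u * d.σb v * x := by
  simp only [conj_apply, mul_assoc, σb_mul_σ_mul, σ_mul_σ, σb_mul_σb, inv_mul_cancel, map_one,
    mul_one]

theorem conj_σ (u : Perm (Fin r)) (v : Perm (Fin t)) (w : Perm (Fin r)) :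
    d.conj u v (d.σ w) = d.σ (u * w * u⁻¹) := by
  simp only [conj_apply, mul_assoc, σb_mul_σ_mul, σ_mul_σ_mul, σ_mul_σ, σb_mul_σb,
    mul_inv_cancel, map_one, mul_one]

theorem conj_σ_swap (u : Perm (Fin r)) (v : Perm (Fin t)) (a b : Fin r) :
    d.conj u v (d.σ (swap a b)) = d.σ (swap (u a) (u b)) := by
  rw [conj_σ, swap_apply_apply]

theorem conj_σb (u : Perm (Fin r)) (v : Perm (Fin t)) (w : Perm (Fin t)) :
    d.conj u v (d.σb w) = d.σb (v * w * v⁻¹) := by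
  simp only [conj_apply, mul_assoc, σb_mul_σ_mul, σ_mul_σ_mul, σb_mul_σb, mul_inv_cancel,
    map_one, one_mul]

theorem conj_σb_swap (u : Perm (Fin r)) (v : Perm (Fin t)) (a b : Fin t) :
    d.conj u v (d.σb (swap a b)) = d.σb (swap (v a) (v b)) := by
  rw [conj_σb, swap_apply_apply]

theorem conj_c (u : Perm (Fin r)) (v : Perm (Fin t)) (i : Fin r) :
    d.conj u v (d.c i) = d.c (u i) := by
  simp only [conj_apply, mul_assoc, σb_mul_c_mul, σ_mul_c_mul, σb_mul_σ_mul, σ_mul_σ,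
    σb_mul_σb, mul_inv_cancel, map_one, mul_one]

theorem conj_cb (u : Perm (Fin r)) (v : Perm (Fin t)) (j : Fin t) :
    d.conj u v (d.cb j) = d.cb (v j) := by
  simp only [conj_apply, mul_assoc, σb_mul_cb_mul, σ_mul_cb_mul, σb_mul_σ_mul, σ_mul_σ,
    σb_mul_σb, mul_inv_cancel, map_one, mul_one]

theorem σ_commute_e [NeZero r] {w : Perm (Fin r)} (hw : w 0 = 0) : Commute (d.σ w) d.e := by
  have h := map_mem_of_adjSwaps d.σ (S := Submonoid.centralizer {d.e}) (lo := 1) (hi := r - 1)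
    (fun i h1 h2 => by
      rw [Submonoid.mem_centralizer_iff]; rintro _ rfl; exact (d.s_e_comm i h1 (by omega)).symm)
    w fun x hx =>
      ⟨Nat.one_le_iff_ne_zero.mpr fun h => hx (by rw [show x = 0 from Fin.ext h, hw]), by omega⟩
  rw [Submonoid.mem_centralizer_iff] at h
  exact (h d.e rfl).symm

theorem σb_commute_e [NeZero t] {w : Perm (Fin t)} (hw : w 0 = 0) : Commute (d.σb w) d.e := by
  have h := map_mem_of_adjSwaps d.σb (S := Submonoid.centralizer {d.e}) (lo := 1) (hi := t - 1)
    (fun i h1 h2 => by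
      rw [Submonoid.mem_centralizer_iff]; rintro _ rfl; exact (d.sb_e_comm i h1 (by omega)).symm)
    w fun x hx =>
      ⟨Nat.one_le_iff_ne_zero.mpr fun h => hx (by rw [show x = 0 from Fin.ext h, hw]), by omega⟩
  rw [Submonoid.mem_centralizer_iff] at h
  exact (h d.e rfl).symm

theorem σ_commute_of_conj_eq {w : Perm (Fin r)} {x : A} (h : d.conj w 1 x = x) :
    Commute (d.σ w) x := by
  have := d.conj_mul_perm w 1 x
  rwa [h, map_one, mul_one, eq_comm] at this

theorem σb_commute_of_conj_eq {w : Perm (Fin t)} {x : A} (h : d.conj 1 w x = x) :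
    Commute (d.σb w) x := by
  have := d.conj_mul_perm 1 w x
  rwa [h, map_one, one_mul, eq_comm] at this

theorem conj_e_of_fix [NeZero r] [NeZero t] {u : Perm (Fin r)} {v : Perm (Fin t)} (hu : u 0 = 0)
    (hv : v 0 = 0) : d.conj u v d.e = d.e := by
  refine (d.permUnit u v).mul_left_inj.mp ?_
  change _ * (d.σ u * d.σb v) = _ * (d.σ u * d.σb v)
  rw [conj_mul_perm, mul_assoc, (d.σb_commute_e hv).eq, ← mul_assoc, (d.σ_commute_e hu).eq,
    mul_assoc]

/-- The element `e_{i+1,j+1}` of the paper: indices of `Fin r`, `Fin t` are 0-based. -/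
def eAt [NeZero r] [NeZero t] (i : Fin r) (j : Fin t) : A := d.conj (swap 0 i) (swap 0 j) d.e

theorem conj_e [NeZero r] [NeZero t] (u : Perm (Fin r)) (v : Perm (Fin t)) :
    d.conj u v d.e = d.eAt (u 0) (v 0) := by
  have hu : (swap 0 (u 0) * u) 0 = 0 := swap_apply_right _ _
  have hv : (swap 0 (v 0) * v) 0 = 0 := swap_apply_right _ _
  calc d.conj u v d.e
      = d.conj (swap 0 (u 0) * (swap 0 (u 0) * u)) (swap 0 (v 0) * (swap 0 (v 0) * v)) d.e := by
        rw [← mul_assoc, ← mul_assoc, swap_mul_self, swap_mul_self, one_mul, one_mul]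
    _ = d.eAt (u 0) (v 0) := by rw [← conj_conj, d.conj_e_of_fix hu hv, eAt]

theorem e_σ_swap_e [NeZero r] [NeZero t] (hr : 1 < r) {j : Fin r} (hj : j ≠ 0) :
    d.e * d.σ (swap 0 j) * d.e = d.e := by
  have h := congrArg (d.conj (swap ⟨1, hr⟩ j) 1) (d.e_s_e hr)
  have h0 : swap ⟨1, hr⟩ j 0 = 0 := swap_apply_of_ne_of_ne (by simp [Fin.ext_iff]) hj.symm
  have hz : (⟨0, by omega⟩ : Fin r) = 0 := rfl
  rwa [sw_eq (by omega) hr, hz, map_mul, map_mul, conj_σ_swap, d.conj_e_of_fix h0 rfl,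
    swap_apply_left, h0] at h

theorem e_σb_swap_e [NeZero r] [NeZero t] (ht : 1 < t) {j : Fin t} (hj : j ≠ 0) :
    d.e * d.σb (swap 0 j) * d.e = d.e := by
  have h := congrArg (d.conj 1 (swap ⟨1, ht⟩ j)) (d.e_sb_e ht)
  have h0 : swap ⟨1, ht⟩ j 0 = 0 := swap_apply_of_ne_of_ne (by simp [Fin.ext_iff]) hj.symm
  have hz : (⟨0, by omega⟩ : Fin t) = 0 := rfl
  rwa [sw_eq (by omega) ht, hz, map_mul, map_mul, conj_σb_swap, d.conj_e_of_fix rfl h0,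
    swap_apply_left, h0] at h

end General

theorem e_mul_mul_e_eq_zero (d : WBC R A 1 1) (hu : d.IsUniversal) (a : A) :
    d.e * a * d.e = 0 := by
  let M := Submodule.span R {d.e, d.c 0 * d.e}
  have he : d.e ∈ M := Submodule.subset_span (by simp)
  have hce : d.c 0 * d.e ∈ M := Submodule.subset_span (by simp)
  have hcb : d.cb 0 * d.e = d.c 0 * d.e := (d.c1_e one_pos one_pos).symm
  have hece : d.e * d.c 0 * d.e = 0 := d.e_c_e one_pos
  have hcbce : d.cb 0 * (d.c 0 * d.e) = d.e := by
    rw [← mul_assoc, ← neg_neg (d.cb 0 * d.c 0), ← d.anti_ccb, neg_mul, mul_assoc, hcb,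
      ← mul_assoc, d.c_sq, neg_one_mul, neg_neg]
  have hM : ∀ g ∈ d.gens, ∀ x ∈ M, g * x ∈ M := by
    intro g hg
    suffices M ≤ M.comap (LinearMap.mulLeft R g) from fun x hx => this hx
    refine Submodule.span_le.mpr ?_
    simp only [Set.insert_subset_iff, Set.singleton_subset_iff, SetLike.mem_coe,
      Submodule.mem_comap, LinearMap.mulLeft_apply]
    rcases hg with (((⟨w, rfl⟩ | ⟨w, rfl⟩) | ⟨i, rfl⟩) | ⟨j, rfl⟩) | rfl
    · rw [Subsingleton.elim w 1, map_one, one_mul, one_mul]; exact ⟨he, hce⟩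
    · rw [Subsingleton.elim w 1, map_one, one_mul, one_mul]; exact ⟨he, hce⟩
    · rw [Subsingleton.elim i 0, ← mul_assoc, d.c_sq, neg_one_mul]; exact ⟨hce, M.neg_mem he⟩
    · rw [Subsingleton.elim j 0, hcb, hcbce]; exact ⟨hce, he⟩
    · rw [d.e_sq, ← mul_assoc, hece]; exact ⟨M.zero_mem, M.zero_mem⟩
  have hMe : M ≤ LinearMap.ker (LinearMap.mulLeft R d.e) := by
    refine Submodule.span_le.mpr ?_
    simp only [Set.insert_subset_iff, Set.singleton_subset_iff, SetLike.mem_coe,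
      LinearMap.mem_ker, LinearMap.mulLeft_apply]
    exact ⟨d.e_sq, by rw [← mul_assoc, hece]⟩
  rw [mul_assoc]
  exact hMe (d.mul_mem_of_gens_mul_mem hu hM a d.e he)

section Last

variable {m : ℕ} (d : WBC R A (m + 2) (m + 2))

/-- The element `e_k` of `BC_{k,k}`, `k = m + 2`; the paper's index `k` is `Fin.last (m + 1)`. -/
def eLast : A := d.eAt (Fin.last _) (Fin.last _)

theorem eLast_eq_conj : d.eLast = d.conj (swap 0 (Fin.last _)) (swap 0 (Fin.last _)) d.e := rfl

theorem eLast_eq_mul : d.eLast = d.σ (swap 0 (Fin.last _)) * d.σb (swap 0 (Fin.last _)) * d.e *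
    (d.σ (swap 0 (Fin.last _)) * d.σb (swap 0 (Fin.last _))) := by
  rw [eLast_eq_conj, conj_apply, swap_inv]

theorem E_eq_eLast : d.E (m + 2) (m + 2) = d.eLast := by
  have hτ : sw (m + 2) (1 - 1) (m + 2 - 1) = swap 0 (Fin.last _) := sw_eq _ _
  rw [E, tr, trb, hτ, eLast_eq_mul, ← d.comm_σσb]
  simp only [mul_assoc]

theorem conj_eLast_of_fix {u v : Perm (Fin (m + 2))} (hu : u (Fin.last _) = Fin.last _)
    (hv : v (Fin.last _) = Fin.last _) : d.conj u v d.eLast = d.eLast := by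
  rw [eLast_eq_conj, conj_conj, conj_e, Perm.mul_apply, Perm.mul_apply, swap_apply_left, hu, hv]
  rfl

theorem σ_commute_eLast {w : Perm (Fin (m + 2))} (hw : w (Fin.last _) = Fin.last _) :
    Commute (d.σ w) d.eLast :=
  d.σ_commute_of_conj_eq (d.conj_eLast_of_fix hw rfl)

theorem σb_commute_eLast {w : Perm (Fin (m + 2))} (hw : w (Fin.last _) = Fin.last _) :
    Commute (d.σb w) d.eLast :=
  d.σb_commute_of_conj_eq (d.conj_eLast_of_fix rfl hw)

theorem c_commute_eLast {i : Fin (m + 2)} (hi : i ≠ Fin.last _) : Commute (d.c i) d.eLast := by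
  have hτi : swap 0 (Fin.last _) i ≠ 0 := by
    rw [Ne, swap_apply_eq_iff, swap_apply_left]; exact hi
  have h := Commute.map (d.c_e_comm _ (Fin.val_ne_zero_iff.mpr hτi))
    (d.conj (swap 0 (Fin.last _)) (swap 0 (Fin.last _)))
  rwa [conj_c, swap_apply_self, ← eLast_eq_conj] at h

theorem cb_commute_eLast {j : Fin (m + 2)} (hj : j ≠ Fin.last _) :
    Commute (d.cb j) d.eLast := by
  have hτj : swap 0 (Fin.last _) j ≠ 0 := by
    rw [Ne, swap_apply_eq_iff, swap_apply_left]; exact hj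
  have h := Commute.map (d.cb_e_comm _ (Fin.val_ne_zero_iff.mpr hτj))
    (d.conj (swap 0 (Fin.last _)) (swap 0 (Fin.last _)))
  rwa [conj_cb, swap_apply_self, ← eLast_eq_conj] at h

theorem eLast_mul_eLast : d.eLast * d.eLast = 0 := by
  rw [eLast_eq_conj, ← map_mul, d.e_sq, map_zero]

theorem eLast_mul_cb_mul_eLast : d.eLast * d.cb (Fin.last _) * d.eLast = 0 := by
  have h := congrArg (d.conj (swap 0 (Fin.last _)) (swap 0 (Fin.last _))) (d.e_cb_e (by omega))
  rwa [map_mul, map_mul, conj_cb, ← eLast_eq_conj, map_zero] at h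

theorem c_mul_eLast : d.c (Fin.last _) * d.eLast = d.cb (Fin.last _) * d.eLast := by
  have h := congrArg (d.conj (swap 0 (Fin.last _)) (swap 0 (Fin.last _)))
    (d.c1_e (by omega) (by omega))
  rwa [map_mul, map_mul, conj_c, conj_cb, ← eLast_eq_conj] at h

theorem eLast_mul_c : d.eLast * d.c (Fin.last _) = d.eLast * d.cb (Fin.last _) := by
  have h := congrArg (d.conj (swap 0 (Fin.last _)) (swap 0 (Fin.last _)))
    (d.e_c1 (by omega) (by omega))
  rwa [map_mul, map_mul, conj_c, conj_cb, ← eLast_eq_conj] at h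

theorem eLast_mul_σ_swap_mul_eLast {i : Fin (m + 2)} (hi : i ≠ Fin.last _) :
    d.eLast * d.σ (swap i (Fin.last _)) * d.eLast = d.eLast := by
  have hτi : swap 0 (Fin.last _) i ≠ 0 := by
    rw [Ne, swap_apply_eq_iff, swap_apply_left]; exact hi
  have h := congrArg (d.conj (swap 0 (Fin.last _)) (swap 0 (Fin.last _)))
    (d.e_σ_swap_e (by omega) hτi)
  rwa [map_mul, map_mul, conj_σ_swap, swap_apply_left, swap_apply_self,
    swap_comm (Fin.last _) i, ← eLast_eq_conj] at h

theorem eLast_mul_σb_swap_mul_eLast {j : Fin (m + 2)} (hj : j ≠ Fin.last _) :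
    d.eLast * d.σb (swap j (Fin.last _)) * d.eLast = d.eLast := by
  have hτj : swap 0 (Fin.last _) j ≠ 0 := by
    rw [Ne, swap_apply_eq_iff, swap_apply_left]; exact hj
  have h := congrArg (d.conj (swap 0 (Fin.last _)) (swap 0 (Fin.last _)))
    (d.e_σb_swap_e (by omega) hτj)
  rwa [map_mul, map_mul, conj_σb_swap, swap_apply_left, swap_apply_self,
    swap_comm (Fin.last _) j, ← eLast_eq_conj] at h

theorem swap_one_last_zero : swap 1 (Fin.last (m + 1)) 0 = 0 :=
  swap_apply_of_ne_of_ne zero_ne_one (Fin.last_pos).ne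

theorem braid1_last : d.e * d.σ (swap 0 (Fin.last _)) * d.σb (swap 0 (Fin.last _)) * d.e *
    d.σ (swap 0 (Fin.last _)) = d.e * d.σ (swap 0 (Fin.last _)) * d.σb (swap 0 (Fin.last _)) *
      d.e * d.σb (swap 0 (Fin.last _)) := by
  have h := congrArg (d.conj (swap 1 (Fin.last _)) (swap 1 (Fin.last _)))
    (d.braid1 (by omega) (by omega))
  rwa [show sw (m + 2) 0 1 = swap 0 1 from sw_eq _ _, map_mul, map_mul, map_mul, map_mul,
    map_mul, map_mul, map_mul, map_mul, conj_σ_swap, conj_σb_swap,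
    d.conj_e_of_fix swap_one_last_zero swap_one_last_zero, swap_one_last_zero,
    swap_apply_left] at h

theorem braid2_last : d.σ (swap 0 (Fin.last _)) * d.e * d.σ (swap 0 (Fin.last _)) *
    d.σb (swap 0 (Fin.last _)) * d.e = d.σb (swap 0 (Fin.last _)) * d.e *
      d.σ (swap 0 (Fin.last _)) * d.σb (swap 0 (Fin.last _)) * d.e := by
  have h := congrArg (d.conj (swap 1 (Fin.last _)) (swap 1 (Fin.last _)))
    (d.braid2 (by omega) (by omega))
  rwa [show sw (m + 2) 0 1 = swap 0 1 from sw_eq _ _, map_mul, map_mul, map_mul, map_mul,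
    map_mul, map_mul, map_mul, map_mul, conj_σ_swap, conj_σb_swap,
    d.conj_e_of_fix swap_one_last_zero swap_one_last_zero, swap_one_last_zero,
    swap_apply_left] at h

theorem e_mul_eLast : d.e * d.eLast =
    d.e * (d.σ (swap 0 (Fin.last _)) * d.σb (swap 0 (Fin.last _))) * d.e := by
  calc d.e * d.eLast = d.e * d.σ (swap 0 (Fin.last _)) * d.σb (swap 0 (Fin.last _)) * d.e *
        d.σ (swap 0 (Fin.last _)) * d.σb (swap 0 (Fin.last _)) := by
        rw [eLast_eq_mul]; simp only [mul_assoc]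
    _ = _ := by
        rw [braid1_last, mul_assoc _ (d.σb _), σb_mul_σb, swap_mul_self, map_one, mul_one,
          mul_assoc d.e]

theorem eLast_mul_e : d.eLast * d.e =
    d.e * (d.σ (swap 0 (Fin.last _)) * d.σb (swap 0 (Fin.last _))) * d.e := by
  calc d.eLast * d.e = d.σb (swap 0 (Fin.last _)) * (d.σ (swap 0 (Fin.last _)) * d.e *
        d.σ (swap 0 (Fin.last _)) * d.σb (swap 0 (Fin.last _)) * d.e) := by
        rw [eLast_eq_mul]; simp only [mul_assoc]; exact (d.σb_mul_σ_mul _ _ _).symm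
    _ = _ := by
        rw [braid2_last]; simp only [← mul_assoc]
        rw [σb_mul_σb, swap_mul_self, map_one, one_mul, mul_assoc d.e]

theorem commute_e_eLast : Commute d.e d.eLast :=
  d.e_mul_eLast.trans d.eLast_mul_e.symm

theorem perm_last_mul_self :
    d.σ (swap 0 (Fin.last _)) * d.σb (swap 0 (Fin.last _)) *
      (d.σ (swap 0 (Fin.last _)) * d.σb (swap 0 (Fin.last _))) = 1 := by
  simpa only [swap_inv] using d.perm_mul_perm_inv (swap 0 (Fin.last (m + 1))) (swap 0 (Fin.last _))

theorem eLast_mul_perm : d.eLast * (d.σ (swap 0 (Fin.last _)) * d.σb (swap 0 (Fin.last _))) =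
    d.σ (swap 0 (Fin.last _)) * d.σb (swap 0 (Fin.last _)) * d.e := by
  have h := d.conj_mul_perm (swap 0 (Fin.last _)) (swap 0 (Fin.last _)) d.e
  rwa [← eLast_eq_conj] at h

theorem eLast_mul_perm_mul_eLast :
    d.eLast * (d.σ (swap 0 (Fin.last _)) * d.σb (swap 0 (Fin.last _))) * d.eLast =
      d.e * d.eLast := by
  rw [e_mul_eLast]
  have hgg := d.perm_last_mul_self
  have hE := d.eLast_eq_mul
  set g := d.σ (swap 0 (Fin.last (m + 1))) * d.σb (swap 0 (Fin.last _))
  calc d.eLast * g * d.eLast = g * (d.eLast * d.e) := by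
        rw [eLast_mul_perm, mul_assoc, d.commute_e_eLast.eq]
    _ = d.e * g * d.e := by
        rw [hE]; simp only [mul_assoc]; rw [← mul_assoc g g, hgg, one_mul]

theorem swap_zero_apply_last {i : Fin (m + 2)} (hi : i ≠ Fin.last _) :
    swap 0 i (Fin.last _) = Fin.last _ :=
  swap_apply_of_ne_of_ne (Fin.last_pos).ne' hi.symm

theorem eLast_mul_σ_mul_σb_mul_eLast {i j : Fin (m + 2)} (hi : i ≠ Fin.last _)
    (hj : j ≠ Fin.last _) :
    d.eLast * d.σ (swap i (Fin.last _)) * d.σb (swap j (Fin.last _)) * d.eLast =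
      d.eAt i j * d.eLast := by
  have h := congrArg (d.conj (swap 0 i) (swap 0 j)) d.eLast_mul_perm_mul_eLast
  rwa [map_mul, map_mul, map_mul, map_mul,
    d.conj_eLast_of_fix (swap_zero_apply_last hi) (swap_zero_apply_last hj), conj_σ_swap,
    conj_σb_swap, swap_apply_left, swap_apply_left, swap_zero_apply_last hi,
    swap_zero_apply_last hj, ← mul_assoc] at h

def lower : Subalgebra R A := Algebra.adjoin R (d.lowerGens (m + 1))

theorem e_mem_lower : d.e ∈ d.lower := Algebra.subset_adjoin (Or.inl ⟨by omega, rfl⟩)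

theorem cn_one : d.cn 1 = d.c 0 := by rw [cn, dif_pos (by omega)]; rfl

theorem cbn_one : d.cbn 1 = d.cb 0 := by rw [cbn, dif_pos (by omega)]; rfl

theorem sw_apply_last {i j : ℕ} (hi : i ≤ m) (hj : j ≤ m) :
    sw (m + 2) i j (Fin.last _) = Fin.last _ := by
  rw [sw_eq (by omega) (by omega)]
  exact swap_apply_of_ne_of_ne (by simp [Fin.ext_iff]; omega) (by simp [Fin.ext_iff]; omega)

theorem c_zero_mem_lower : d.c 0 ∈ d.lower :=
  Algebra.subset_adjoin (Or.inr (Or.inr (Or.inr (Or.inl ⟨by omega, d.cn_one.symm⟩))))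

theorem cb_zero_mem_lower : d.cb 0 ∈ d.lower :=
  Algebra.subset_adjoin (Or.inr (Or.inr (Or.inr (Or.inr ⟨by omega, d.cbn_one.symm⟩))))

theorem σ_mem_lower {w : Perm (Fin (m + 2))} (hw : w (Fin.last _) = Fin.last _) :
    d.σ w ∈ d.lower :=
  map_mem_of_adjSwaps d.σ (S := d.lower.toSubmonoid) (lo := 0) (hi := m)
    (fun i _ hi => Algebra.subset_adjoin (Or.inr (Or.inl ⟨i + 1, by omega, by omega, rfl⟩)))
    w fun x hx =>
      ⟨Nat.zero_le _, Nat.lt_succ_iff.mp (Fin.lt_last_iff_ne_last.mpr fun h => hx (h ▸ hw))⟩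

theorem σb_mem_lower {w : Perm (Fin (m + 2))} (hw : w (Fin.last _) = Fin.last _) :
    d.σb w ∈ d.lower :=
  map_mem_of_adjSwaps d.σb (S := d.lower.toSubmonoid) (lo := 0) (hi := m)
    (fun i _ hi =>
      Algebra.subset_adjoin (Or.inr (Or.inr (Or.inl ⟨i + 1, by omega, by omega, rfl⟩))))
    w fun x hx =>
      ⟨Nat.zero_le _, Nat.lt_succ_iff.mp (Fin.lt_last_iff_ne_last.mpr fun h => hx (h ▸ hw))⟩

theorem conj_mem_lower {u v : Perm (Fin (m + 2))} (hu : u (Fin.last _) = Fin.last _)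
    (hv : v (Fin.last _) = Fin.last _) {x : A} (hx : x ∈ d.lower) : d.conj u v x ∈ d.lower := by
  have hu' : u⁻¹ (Fin.last _) = Fin.last _ := by rw [Perm.inv_eq_iff_eq, hu]
  have hv' : v⁻¹ (Fin.last _) = Fin.last _ := by rw [Perm.inv_eq_iff_eq, hv]
  rw [conj_apply]
  exact mul_mem (mul_mem (mul_mem (d.σ_mem_lower hu) (d.σb_mem_lower hv)) hx)
    (mul_mem (d.σ_mem_lower hu') (d.σb_mem_lower hv'))

theorem c_mem_lower {i : Fin (m + 2)} (hi : i ≠ Fin.last _) : d.c i ∈ d.lower := by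
  have h := d.conj_mem_lower (swap_zero_apply_last hi) (rfl : (1 : Perm (Fin (m + 2))) _ = _)
    d.c_zero_mem_lower
  rwa [conj_c, swap_apply_left] at h

theorem cb_mem_lower {j : Fin (m + 2)} (hj : j ≠ Fin.last _) : d.cb j ∈ d.lower := by
  have h := d.conj_mem_lower (rfl : (1 : Perm (Fin (m + 2))) _ = _) (swap_zero_apply_last hj)
    d.cb_zero_mem_lower
  rwa [conj_cb, swap_apply_left] at h

theorem eAt_mem_lower {i j : Fin (m + 2)} (hi : i ≠ Fin.last _) (hj : j ≠ Fin.last _) :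
    d.eAt i j ∈ d.lower :=
  d.conj_mem_lower (swap_zero_apply_last hi) (swap_zero_apply_last hj) d.e_mem_lower

theorem commute_eLast_of_mem_lower {x : A} (hx : x ∈ d.lower) : Commute x d.eLast := by
  have hle : d.lower ≤ Subalgebra.centralizer R {d.eLast} := by
    refine Algebra.adjoin_le ?_
    rintro _ (⟨-, rfl⟩ | ⟨j, -, hj, rfl⟩ | ⟨j, -, hj, rfl⟩ | ⟨-, rfl⟩ | ⟨-, rfl⟩)
      <;> rw [SetLike.mem_coe, Subalgebra.mem_centralizer_iff] <;> rintro _ rfl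
    · exact d.commute_e_eLast.symm.eq
    · exact (d.σ_commute_eLast (sw_apply_last (by omega) (by omega))).symm.eq
    · exact (d.σb_commute_eLast (sw_apply_last (by omega) (by omega))).symm.eq
    · exact (cn_one d ▸ d.c_commute_eLast (Fin.last_pos).ne).symm.eq
    · exact (cbn_one d ▸ d.cb_commute_eLast (Fin.last_pos).ne).symm.eq
  have h := hle hx
  rw [Subalgebra.mem_centralizer_iff] at h
  exact (h _ rfl).symm

theorem eLast_mul_cb_pow_mul_eLast (b : ℕ) : d.eLast * d.cb (Fin.last _) ^ b * d.eLast = 0 := by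
  rw [cb_pow]
  rcases Nat.mod_two_eq_zero_or_one b with h | h <;> rw [h]
  · rw [pow_zero, mul_one, eLast_mul_eLast]
  · rw [pow_one, eLast_mul_cb_mul_eLast]

theorem eLast_mul_σ_swap_mul_cb_pow_mul_eLast {i : Fin (m + 2)} (hi : i ≠ Fin.last _) (b : ℕ) :
    d.eLast * d.σ (swap i (Fin.last _)) * d.cb (Fin.last _) ^ b * d.eLast =
      d.c i ^ (b % 2) * d.eLast := by
  rw [cb_pow]
  rcases Nat.mod_two_eq_zero_or_one b with h | h <;> rw [h]
  · rw [pow_zero, pow_zero, mul_one, one_mul, d.eLast_mul_σ_swap_mul_eLast hi]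
  · calc _ = d.eLast * (d.σ (swap i (Fin.last _)) * d.c (Fin.last _)) * d.eLast := by
          rw [pow_one, mul_assoc _ (d.cb _), ← c_mul_eLast]; simp only [mul_assoc]
      _ = d.c i * (d.eLast * d.σ (swap i (Fin.last _)) * d.eLast) := by
          rw [σ_mul_c, swap_apply_right, ← mul_assoc, ← (d.c_commute_eLast hi).eq]
          simp only [mul_assoc]
      _ = _ := by rw [d.eLast_mul_σ_swap_mul_eLast hi, pow_one]

theorem eLast_mul_σ_mul_σb_mul_cb_pow_mul_eLast (i j : Fin (m + 2)) (b : ℕ) :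
    ∃ l ∈ d.lower, d.eLast * d.σ (swap i (Fin.last _)) * d.σb (swap j (Fin.last _)) *
      d.cb j ^ b * d.eLast = l * d.eLast := by
  by_cases hj : j = Fin.last _
  · subst hj
    rw [swap_self, ← Perm.one_def, map_one, mul_one]
    by_cases hi : i = Fin.last _
    · subst hi
      rw [swap_self, ← Perm.one_def, map_one, mul_one, eLast_mul_cb_pow_mul_eLast]
      exact ⟨0, zero_mem _, (zero_mul _).symm⟩
    · exact ⟨_, pow_mem (d.c_mem_lower hi) _, d.eLast_mul_σ_swap_mul_cb_pow_mul_eLast hi b⟩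
  · have hcb := d.commute_eLast_of_mem_lower (pow_mem (d.cb_mem_lower hj) b)
    rw [mul_assoc _ (d.cb j ^ b), hcb.eq, ← mul_assoc]
    by_cases hi : i = Fin.last _
    · subst hi
      rw [swap_self, ← Perm.one_def, map_one, mul_one, d.eLast_mul_σb_swap_mul_eLast hj]
      exact ⟨_, pow_mem (d.cb_mem_lower hj) b, hcb.eq.symm⟩
    · rw [d.eLast_mul_σ_mul_σb_mul_eLast hi hj, mul_assoc, ← hcb.eq, ← mul_assoc]
      exact ⟨_, mul_mem (d.eAt_mem_lower hi hj) (pow_mem (d.cb_mem_lower hj) b), rfl⟩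

def cbPerm (b : ℕ) (w v : Perm (Fin (m + 2))) : A := d.cb (Fin.last _) ^ b * d.σ w * d.σb v

theorem eLast_mul_cbPerm_mul_eLast (b : ℕ) (w v : Perm (Fin (m + 2))) :
    ∃ l ∈ d.lower, d.eLast * d.cbPerm b w v * d.eLast = l * d.eLast := by
  set i := w⁻¹ (Fin.last _)
  set j := v⁻¹ (Fin.last _)
  have hw : (w * swap i (Fin.last _)) (Fin.last _) = Fin.last _ := by
    rw [Perm.mul_apply, swap_apply_right, ← Perm.mul_apply, mul_inv_cancel, Perm.one_apply]
  have hv : (v * swap j (Fin.last _)) (Fin.last _) = Fin.last _ := by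
    rw [Perm.mul_apply, swap_apply_right, ← Perm.mul_apply, mul_inv_cancel, Perm.one_apply]
  have hσ : d.σ w = d.σ (w * swap i (Fin.last _)) * d.σ (swap i (Fin.last _)) := by
    rw [σ_mul_σ, mul_assoc, swap_mul_self, mul_one]
  have hσb : d.σb v = d.σb (v * swap j (Fin.last _)) * d.σb (swap j (Fin.last _)) := by
    rw [σb_mul_σb, mul_assoc, swap_mul_self, mul_one]
  have hcb : d.cb (Fin.last _) ^ b * d.σb (swap j (Fin.last _)) =
      d.σb (swap j (Fin.last _)) * d.cb j ^ b := by
    have := (SemiconjBy.pow_right (d.σb_mul_cb (swap j (Fin.last _)) j) b).eq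
    rwa [swap_apply_left, eq_comm] at this
  obtain ⟨l, hl, h⟩ := d.eLast_mul_σ_mul_σb_mul_cb_pow_mul_eLast i j b
  refine ⟨d.σ (w * swap i (Fin.last _)) * d.σb (v * swap j (Fin.last _)) * l,
    mul_mem (mul_mem (d.σ_mem_lower hw) (d.σb_mem_lower hv)) hl, ?_⟩
  have hP := d.commute_eLast_of_mem_lower (mul_mem (d.σ_mem_lower hw) (d.σb_mem_lower hv))
  have hσcb := Commute.pow_right (d.comm_σcb (w * swap i (Fin.last _)) (Fin.last _)) b
  have hσbcb : Commute (d.σb (v * swap j (Fin.last _))) (d.cb (Fin.last _) ^ b) :=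
    Commute.pow_right (by rw [Commute, SemiconjBy, σb_mul_cb, hv]) b
  have hσcb' := Commute.pow_right (d.comm_σcb (swap i (Fin.last _)) (Fin.last _)) b
  calc d.eLast * d.cbPerm b w v * d.eLast
      = d.σ (w * swap i (Fin.last _)) * d.σb (v * swap j (Fin.last _)) *
          (d.eLast * (d.cb (Fin.last _) ^ b * d.σ (swap i (Fin.last _)) *
            d.σb (swap j (Fin.last _))) * d.eLast) := by
        rw [cbPerm, hσ, hσb]
        simp only [mul_assoc]
        rw [← hσcb.left_comm, ← σb_mul_σ_mul, ← hσbcb.left_comm,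
          ← mul_assoc (d.σ _) (d.σb _), ← hP.left_comm]
        simp only [mul_assoc]
    _ = _ := by
        rw [mul_assoc _ l, ← h]
        simp only [mul_assoc]
        rw [← hσcb'.left_comm, mul_mul_eq_mul_mul hcb]

theorem eLast_mul_cb_pow_mul_c (b : ℕ) (k : Fin (m + 2)) :
    ∃ l ∈ d.lower, ∃ b' : ℕ, d.eLast * d.cb (Fin.last _) ^ b * d.c k =
      l * (d.eLast * d.cb (Fin.last _) ^ b') := by
  have hsign : ((-1) ^ b : A) ∈ d.lower := pow_mem (neg_mem (one_mem _)) b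
  have hanti : d.cb (Fin.last _) ^ b * d.c k = (-1) ^ b * d.c k * d.cb (Fin.last _) ^ b :=
    pow_mul_eq_neg_one_pow_mul_mul (by rw [d.anti_ccb, neg_neg]) b
  rw [mul_assoc, hanti]
  by_cases hk : k = Fin.last _
  · subst hk
    refine ⟨(-1) ^ b, hsign, b + 1, ?_⟩
    rw [← mul_assoc, ← mul_assoc, ← (d.commute_eLast_of_mem_lower hsign).eq,
      mul_assoc _ d.eLast, eLast_mul_c, pow_succ']
    simp only [mul_assoc]
  · have hl : (-1) ^ b * d.c k ∈ d.lower := mul_mem hsign (d.c_mem_lower hk)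
    refine ⟨(-1) ^ b * d.c k, hl, b, ?_⟩
    rw [← mul_assoc, ← (d.commute_eLast_of_mem_lower hl).eq, mul_assoc]

theorem eLast_mul_cb_pow_mul_cb (b : ℕ) (k : Fin (m + 2)) :
    ∃ l ∈ d.lower, ∃ b' : ℕ, d.eLast * d.cb (Fin.last _) ^ b * d.cb k =
      l * (d.eLast * d.cb (Fin.last _) ^ b') := by
  by_cases hk : k = Fin.last _
  · subst hk
    exact ⟨1, one_mem _, b + 1, by rw [one_mul, mul_assoc, pow_succ]⟩
  · have hl : (-1) ^ b * d.cb k ∈ d.lower :=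
      mul_mem (pow_mem (neg_mem (one_mem _)) b) (d.cb_mem_lower hk)
    refine ⟨(-1) ^ b * d.cb k, hl, b, ?_⟩
    rw [mul_assoc, pow_mul_eq_neg_one_pow_mul_mul (d.cb_anti _ _ (Ne.symm hk)) b, ← mul_assoc,
      ← (d.commute_eLast_of_mem_lower hl).eq, mul_assoc]

theorem e_eq_perm_mul_eLast_mul_perm : d.e =
    d.σ (swap 0 (Fin.last _)) * d.σb (swap 0 (Fin.last _)) * d.eLast *
      (d.σ (swap 0 (Fin.last _)) * d.σb (swap 0 (Fin.last _))) := by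
  rw [mul_assoc _ d.eLast, eLast_mul_perm, ← mul_assoc, perm_last_mul_self, one_mul]

theorem eLast_mul_cbPerm_mul_mem_gens (b : ℕ) (w v : Perm (Fin (m + 2))) {g : A}
    (hg : g ∈ d.gens) : ∃ l ∈ d.lower, ∃ (b' : ℕ) (w' v' : Perm (Fin (m + 2))),
      d.eLast * d.cbPerm b w v * g = l * (d.eLast * d.cbPerm b' w' v') := by
  rcases hg with (((⟨u, rfl⟩ | ⟨u, rfl⟩) | ⟨k, rfl⟩) | ⟨k, rfl⟩) | rfl
  · refine ⟨1, one_mem _, b, w * u, v, ?_⟩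
    simp only [cbPerm, one_mul, mul_assoc, σb_mul_σ, σ_mul_σ_mul]
  · refine ⟨1, one_mem _, b, w, v * u, ?_⟩
    simp only [cbPerm, one_mul, mul_assoc, σb_mul_σb]
  · obtain ⟨l, hl, b', h⟩ := d.eLast_mul_cb_pow_mul_c b (w k)
    refine ⟨l, hl, b', w, v, ?_⟩
    calc _ = d.eLast * d.cb (Fin.last _) ^ b * d.c (w k) * (d.σ w * d.σb v) := by
          simp only [cbPerm, mul_assoc, d.comm_σbc, σ_mul_c_mul]
      _ = _ := by rw [h, cbPerm]; simp only [mul_assoc]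
  · obtain ⟨l, hl, b', h⟩ := d.eLast_mul_cb_pow_mul_cb b (v k)
    refine ⟨l, hl, b', w, v, ?_⟩
    calc _ = d.eLast * d.cb (Fin.last _) ^ b * d.cb (v k) * (d.σ w * d.σb v) := by
          simp only [cbPerm, mul_assoc, σb_mul_cb, σ_mul_cb_mul]
      _ = _ := by rw [h, cbPerm]; simp only [mul_assoc]
  · obtain ⟨l, hl, h⟩ := d.eLast_mul_cbPerm_mul_eLast b (w * swap 0 (Fin.last _))
      (v * swap 0 (Fin.last _))
    refine ⟨l, hl, 0, swap 0 (Fin.last _), swap 0 (Fin.last _), ?_⟩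
    calc _ = d.eLast * d.cbPerm b (w * swap 0 (Fin.last _)) (v * swap 0 (Fin.last _)) *
          d.eLast * (d.σ (swap 0 (Fin.last _)) * d.σb (swap 0 (Fin.last _))) := by
          conv_lhs => rw [e_eq_perm_mul_eLast_mul_perm]
          simp only [cbPerm, mul_assoc, σb_mul_σ_mul, σ_mul_σ_mul, σb_mul_σb_mul]
      _ = _ := by rw [h, cbPerm, pow_zero, one_mul, mul_assoc]

theorem eLast_mul_mul_eLast_mem (hu : d.IsUniversal) (a : A) :
    ∃ l ∈ d.lower, d.eLast * a * d.eLast = l * d.eLast := by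
  let M : Submodule R A :=
    { carrier :=
        {x | ∀ b w v, ∃ l ∈ d.lower, d.eLast * d.cbPerm b w v * x * d.eLast = l * d.eLast}
      add_mem' := fun {x y} hx hy b w v => by
        obtain ⟨l₁, hl₁, h₁⟩ := hx b w v
        obtain ⟨l₂, hl₂, h₂⟩ := hy b w v
        exact ⟨l₁ + l₂, add_mem hl₁ hl₂, by rw [mul_add, add_mul, h₁, h₂, add_mul]⟩
      zero_mem' := fun b w v => ⟨0, zero_mem _, by rw [mul_zero, zero_mul]⟩
      smul_mem' := fun r x hx b w v => by
        obtain ⟨l, hl, h⟩ := hx b w v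
        exact ⟨r • l, Subalgebra.smul_mem _ hl r, by
          rw [mul_smul_comm, smul_mul_assoc, h, smul_mul_assoc]⟩ }
  have hM : ∀ g ∈ d.gens, ∀ x ∈ M, g * x ∈ M := by
    intro g hg x hx b w v
    obtain ⟨l, hl, b', w', v', h⟩ := d.eLast_mul_cbPerm_mul_mem_gens b w v hg
    obtain ⟨l', hl', h'⟩ := hx b' w' v'
    refine ⟨l * l', mul_mem hl hl', ?_⟩
    rw [← mul_assoc, h, mul_assoc l, mul_assoc l, h', mul_assoc]
  have h1 : (1 : A) ∈ M := fun b w v => by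
    simpa only [mul_one] using d.eLast_mul_cbPerm_mul_eLast b w v
  simpa [cbPerm] using d.mul_mem_of_gens_mul_mem hu hM a 1 h1 0 1 1

theorem range_eLast_mul_mul_eLast (hu : d.IsUniversal) :
    Set.range (fun a : A => d.eLast * a * d.eLast) = (fun b : A => d.eLast * b) '' d.lower := by
  ext y
  constructor
  · rintro ⟨a, rfl⟩
    obtain ⟨l, hl, h⟩ := d.eLast_mul_mul_eLast_mem hu a
    exact ⟨l, hl, by dsimp only; rw [h, (d.commute_eLast_of_mem_lower hl).eq]⟩
  · rintro ⟨b, hb, rfl⟩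
    refine ⟨d.σ (swap 0 (Fin.last _)) * b, ?_⟩
    dsimp only
    rw [mul_assoc, mul_assoc, (d.commute_eLast_of_mem_lower hb).eq, ← mul_assoc, ← mul_assoc,
      d.eLast_mul_σ_swap_mul_eLast (Fin.last_pos).ne]

end Last

end WBC

theorem statement1_general (R A : Type) [CommRing R] [Ring A] [Algebra R A]
    (k : ℕ) (d : WBC R A k k) (hu : d.IsUniversal) :
    (2 ≤ k →
      Set.range (fun a : A => d.E k k * a * d.E k k)
        = (fun b : A => d.E k k * b) '' (↑(Algebra.adjoin R (d.lowerGens (k - 1))) : Set A)) ∧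
    (k = 1 → ∀ a : A, d.e * a * d.e = 0) := by
  refine ⟨fun hk => ?_, fun hk => ?_⟩
  · obtain ⟨m, rfl⟩ := Nat.exists_eq_add_of_le' hk
    rw [WBC.E_eq_eLast]
    exact d.range_eLast_mul_mul_eLast hu
  · subst hk
    exact d.e_mul_mul_e_eq_zero hu

/-- Proposition 2.7: `e_k BC_{k,k} e_k = e_k BC_{k-1,k-1}` for `k ≥ 2`, where
`BC_{k-1,k-1}` is the subalgebra generated by `e_1, s_1, …, s_{k-2}, s̄_1, …, s̄_{k-2}, c_1, c̄_1`;
moreover `e_1 BC_{1,1} e_1 = 0`. -/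
theorem statement1 (R A : Type) [CommRing R] [IsDomain R] [Ring A] [Algebra R A]
    (h2 : IsUnit (2 : R)) (k : ℕ) (hk : 1 ≤ k)
    (d : WBC R A k k) (hu : d.IsUniversal) :
    (2 ≤ k →
      Set.range (fun a : A => d.E k k * a * d.E k k)
        = (fun b : A => d.E k k * b) '' (↑(Algebra.adjoin R (d.lowerGens (k - 1))) : Set A)) ∧
    (k = 1 → ∀ a : A, d.e * a * d.e = 0) :=
  statement1_general R A k d hu
end
end

section
/- In the affine walled Brauer-Clifford superalgebra BC^{aff}_{r,t}, suppose e_1 is torsion-free over the subring R[ω_3, ω_5, …, ω̄_1, ω̄_2, …] generated by the central generators (i.e. h e_1 = 0 with h in this subring forces h = 0). Then ω̄_{2n+1} = Σ_{i=0}^{n} a_{2n+1,i} ω_{2i+1} and ω̄_{2n} = 0 for all n ∈ ℕ, where the coefficients a_{2n+1,i} ∈ R[ω_3, …, ω_{2n−1}] are determined by the recursion a_{1,0} = −1, a_{2n+1,n} = −1, a_{2n+1,j} = a_{2n−1,j−1} for 1 ≤ j ≤ n−1, and a_{2n+1,0} = Σ_{j=0}^{n−1} a_{2n−1,j} ω_{2j+1}.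 In particular ω̄_1 = −ω_1. -/
open Polynomial

noncomputable section

/-!
Put `ē₁ = c₁e₁c₁` and `z = x̄₁ + e₁ - ē₁`; the relation between `x₁` and `e₁ + x̄₁ - ē₁` says
exactly that `z` commutes with `x₁`. Writing `e₁x₁ⁿ⁺¹c₁e₁ = -e₁x̄₁x₁ⁿc₁e₁` and moving `x̄₁` to the
right through `x₁ⁿ` gives back `e₁x₁ⁿ⁺¹c₁e₁` with the opposite sign, so `e₁x₁ⁿc₁e₁ = 0` as `2` is
invertible. Hence `ē₁x₁ⁿe₁ = 0`, `zⁿe₁ = (-x₁)ⁿe₁` and `x̄₁zʲe₁ = zʲ⁺¹e₁ - (-1)ʲω_j e₁`, and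
expanding `e₁x̄₁ᵏe₁` yields `ω̄_k e₁ = (-1)ᵏω_k e₁ - ∑_{i<k} ω̄_i (-1)^{k-1-i} ω_{k-1-i} e₁`.
Torsion-freeness turns this into a recursion for the `ω̄_k`, which is solved by the `a_{2n+1,j}`
because `ω_{2k} = 0`.
-/

open Finset

theorem sum_range_two_mul_add_one_of_even_eq_zero {M : Type*} [AddCommMonoid M] (f : ℕ → M)
    (hf : ∀ m, f (2 * m) = 0) :
    ∀ n, ∑ i ∈ range (2 * n + 1), f i = ∑ m ∈ range n, f (2 * m + 1)
  | 0 => by simpa using hf 0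
  | n + 1 => by
    rw [show 2 * (n + 1) + 1 = 2 * n + 1 + 1 + 1 by ring, sum_range_succ, sum_range_succ,
      sum_range_two_mul_add_one_of_even_eq_zero f hf n, sum_range_succ,
      show 2 * n + 1 + 1 = 2 * (n + 1) by ring, hf, add_zero]

section Coefficients

variable {A : Type} [Ring A] (ω : ℕ → A)

def acoefSum (n : ℕ) : A := ∑ j ∈ range (n + 1), acoef ω n j * ω (2 * j + 1)

theorem acoef_self : ∀ n, acoef ω n n = -1
  | 0 => rfl
  | n + 1 => acoef_self n

theorem acoef_add_succ (i : ℕ) : ∀ j, acoef ω (i + j + 1) j = acoefSum ω i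
  | 0 => rfl
  | j + 1 => acoef_add_succ i j

theorem acoefSum_eq_neg_add_sum (n : ℕ) :
    acoefSum ω n = -ω (2 * n + 1) + ∑ m ∈ range n, acoefSum ω m * ω (2 * (n - 1 - m) + 1) := by
  rw [acoefSum, sum_range_succ, acoef_self, neg_one_mul, add_comm, ← sum_range_reflect]
  congr 1
  refine sum_congr rfl fun m hm => ?_
  rw [← acoef_add_succ ω m (n - 1 - m)]
  congr 2
  have := mem_range.mp hm
  omega

theorem acoef_mem_adjoin {R : Type*} [CommRing R] [Algebra R A] {a : R}
    (hω₁ : ω 1 = algebraMap R A a) (n j : ℕ) :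
    acoef ω n j ∈ Algebra.adjoin R {x | ∃ l, 1 ≤ l ∧ l + 1 ≤ n ∧ x = ω (2 * l + 1)} := by
  induction n generalizing j with
  | zero => exact neg_mem (one_mem _)
  | succ n ih =>
    have hmono : Algebra.adjoin R {x | ∃ l, 1 ≤ l ∧ l + 1 ≤ n ∧ x = ω (2 * l + 1)}
        ≤ Algebra.adjoin R {x | ∃ l, 1 ≤ l ∧ l + 1 ≤ n + 1 ∧ x = ω (2 * l + 1)} :=
      Algebra.adjoin_mono fun x ⟨l, h₁, h₂, hx⟩ => ⟨l, h₁, by omega, hx⟩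
    rcases j with _ | j
    · refine Subalgebra.sum_mem _ fun i hi => mul_mem (hmono (ih i)) ?_
      rcases i with _ | i
      · rw [hω₁]
        exact Subalgebra.algebraMap_mem _ _
      · exact Algebra.subset_adjoin ⟨i + 1, by omega, by simpa using hi, rfl⟩
    · exact hmono (ih j)

variable {ω} {b : ℕ → A}

theorem two_mul_eq_zero_of_recursion (hω : ∀ k, ω (2 * k) = 0)
    (hb : ∀ k, b k = -ω k + ∑ i ∈ range k, b i * ω (k - 1 - i)) (n : ℕ) : b (2 * n) = 0 := by
  induction n using Nat.strong_induction_on with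
  | _ n ih =>
    rw [hb, hω, neg_zero, zero_add]
    refine sum_eq_zero fun i hi => ?_
    have hi := mem_range.mp hi
    rcases Nat.even_or_odd' i with ⟨m, rfl | rfl⟩
    · rw [ih m (by omega), zero_mul]
    · rw [show 2 * n - 1 - (2 * m + 1) = 2 * (n - 1 - m) by omega, hω, mul_zero]

theorem two_mul_add_one_eq_acoefSum_of_recursion (hω : ∀ k, ω (2 * k) = 0)
    (hb : ∀ k, b k = -ω k + ∑ i ∈ range k, b i * ω (k - 1 - i)) (n : ℕ) :
    b (2 * n + 1) = acoefSum ω n := by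
  have hodd : ∀ n, b (2 * n + 1)
      = -ω (2 * n + 1) + ∑ m ∈ range n, b (2 * m + 1) * ω (2 * (n - 1 - m) + 1) := by
    intro n
    rw [hb, sum_range_two_mul_add_one_of_even_eq_zero _
      (fun m => by rw [two_mul_eq_zero_of_recursion hω hb, zero_mul])]
    congr 1
    refine sum_congr rfl fun m hm => ?_
    rw [show 2 * n + 1 - 1 - (2 * m + 1) = 2 * (n - 1 - m) + 1 by have := mem_range.mp hm; omega]
  induction n using Nat.strong_induction_on with
  | _ n ih =>
    rw [hodd, acoefSum_eq_neg_add_sum]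
    congr 1
    exact sum_congr rfl fun m hm => by rw [ih m (mem_range.mp hm)]

end Coefficients

theorem e_mul_pow_mul_pow_mul_e {A : Type} [Ring A] {e y z : A} {ωb θ : ℕ → A}
    (hy : ∀ m, e * y ^ m * e = ωb m * e) (hz : ∀ j, e * z ^ j * e = θ j * e)
    (hyz : ∀ j, y * z ^ j * e = z ^ (j + 1) * e - θ j * e)
    (hθy : ∀ j, Commute (θ j) y) (hθe : ∀ j, Commute (θ j) e)
    (hθωb : ∀ j i, Commute (θ j) (ωb i)) (m j : ℕ) :
    e * y ^ m * z ^ j * e = θ (m + j) * e - ∑ i ∈ range m, ωb i * θ (m + j - 1 - i) * e := by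
  induction m generalizing j with
  | zero => simp [hz]
  | succ m ih =>
    have hθ : e * y ^ m * (θ j * e) = ωb m * θ j * e := by
      rw [← mul_assoc, mul_assoc e, ← ((hθy j).pow_right m).eq, ← mul_assoc, ← (hθe j).eq,
        mul_assoc (θ j), mul_assoc, hy, ← mul_assoc, (hθωb j m).eq]
    calc e * y ^ (m + 1) * z ^ j * e = e * y ^ m * (y * z ^ j * e) := by
          simp only [pow_succ, mul_assoc]
    _ = e * y ^ m * z ^ (j + 1) * e - e * y ^ m * (θ j * e) := by
          rw [hyz, mul_sub, mul_assoc (e * y ^ m)]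
    _ = _ := by
          rw [ih, hθ, sum_range_succ, show m + (j + 1) = m + 1 + j by omega,
            show m + 1 + j - 1 - m = j by omega]
          abel

/-- `e`, `x`, `xb`, `c` stand for `e₁`, `x₁`, `x̄₁`, `c₁`. -/
structure BCaffRelations {A : Type} [Ring A] (e x xb c : A) (ω ωb : ℕ → A) : Prop where
  e_mul_e : e * e = 0
  c_mul_c : c * c = -1
  x_mul_c : x * c = -(c * x)
  commute_xb_c : Commute xb c
  e_mul_add : e * (x + xb) = 0
  add_mul_e : (x + xb) * e = 0
  e_mul_c_mul_e : e * c * e = 0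
  x_mixed : x * (e + xb - c * e * c) = (e - c * e * c + xb) * x
  e_mul_x_pow_mul_e : ∀ m, e * x ^ m * e = ω m * e
  e_mul_xb_pow_mul_e : ∀ m, e * xb ^ m * e = ωb m * e
  commute_ω_e : ∀ k, Commute (ω k) e
  commute_ω_c : ∀ k, Commute (ω k) c
  commute_ω_xb : ∀ k, Commute (ω k) xb
  commute_ω_ωb : ∀ k l, Commute (ω k) (ωb l)

namespace BCaffRelations

variable {A : Type} [Ring A] {e x xb c : A} {ω ωb : ℕ → A}

theorem e_mul_x (h : BCaffRelations e x xb c ω ωb) : e * x = -(e * xb) :=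
  eq_neg_of_add_eq_zero_left (by rw [← mul_add, h.e_mul_add])

theorem xb_mul_e (h : BCaffRelations e x xb c ω ωb) : xb * e = -(x * e) :=
  eq_neg_of_add_eq_zero_right (by rw [← add_mul, h.add_mul_e])

theorem commute_x (h : BCaffRelations e x xb c ω ωb) : Commute x (xb + (e - c * e * c)) := by
  unfold Commute SemiconjBy
  convert h.x_mixed using 2 <;> abel

theorem c_mul_x (h : BCaffRelations e x xb c ω ωb) : c * x = -(x * c) := by
  rw [h.x_mul_c, neg_neg]

theorem c_mul_x_pow (h : BCaffRelations e x xb c ω ωb) (n : ℕ) : c * x ^ n = (-x) ^ n * c := by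
  have hcx : SemiconjBy c x (-x) := by
    rw [SemiconjBy, neg_mul, h.c_mul_x]
  exact (hcx.pow_right n).eq

theorem xb_mul_x_pow (h : BCaffRelations e x xb c ω ωb) (n : ℕ) :
    xb * x ^ n = x ^ n * xb + (x ^ n * (e - c * e * c) - (e - c * e * c) * x ^ n) := by
  calc xb * x ^ n = (xb + (e - c * e * c)) * x ^ n - (e - c * e * c) * x ^ n := by noncomm_ring
  _ = x ^ n * (xb + (e - c * e * c)) - (e - c * e * c) * x ^ n := by
        rw [(h.commute_x.pow_left n).eq]
  _ = _ := by noncomm_ring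

theorem e_mul_c_mul_mul_e (h : BCaffRelations e x xb c ω ωb) {a : A} (hae : Commute a e)
    (hac : Commute a c) : e * c * (a * e) = 0 := by
  rw [← mul_assoc, mul_assoc e, ← hac.eq, ← mul_assoc, ← hae.eq, mul_assoc a, mul_assoc a,
    h.e_mul_c_mul_e, mul_zero]

theorem e_mul_neg_x_pow_mul_e (h : BCaffRelations e x xb c ω ωb) (n : ℕ) :
    e * (-x) ^ n * e = (-1) ^ n * ω n * e := by
  rw [neg_pow, ← mul_assoc, ← ((Commute.neg_one_left e).pow_left n).eq, mul_assoc _ e,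
    mul_assoc _ (e * x ^ n), h.e_mul_x_pow_mul_e, mul_assoc]

theorem e_mul_x_pow_mul_c_mul_e (h : BCaffRelations e x xb c ω ωb) (h2 : IsLeftRegular (2 : A))
    (n : ℕ) : e * x ^ n * c * e = 0 := by
  rcases n with _ | n
  · rw [pow_zero, mul_one, h.e_mul_c_mul_e]
  have hxb : e * x ^ n * xb * c * e = e * x ^ (n + 1) * c * e := by
    calc e * x ^ n * xb * c * e = -(e * x ^ n * (c * x) * e) := by
          rw [mul_assoc _ xb, h.commute_xb_c.eq, mul_assoc _ (c * xb), mul_assoc c, h.xb_mul_e]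
          noncomm_ring
    _ = _ := by rw [h.c_mul_x, pow_succ]; noncomm_ring
  have hright : e * x ^ n * (e - c * e * c) * c * e = 0 := by
    calc e * x ^ n * (e - c * e * c) * c * e
        = e * x ^ n * e * (c * e) - e * x ^ n * c * (e * (c * c) * e) := by noncomm_ring
    _ = ω n * (e * c * e) - e * x ^ n * c * (-(e * e)) := by
        rw [h.e_mul_x_pow_mul_e, h.c_mul_c, mul_assoc (ω n), ← mul_assoc e c e, mul_neg_one,
          neg_mul]
    _ = 0 := by rw [h.e_mul_c_mul_e, h.e_mul_e]; simp
  have hleft : e * (e - c * e * c) * x ^ n * c * e = 0 := by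
    calc e * (e - c * e * c) * x ^ n * c * e
        = e * e * x ^ n * c * e - e * c * e * (c * x ^ n * c) * e := by noncomm_ring
    _ = e * c * (e * (-x) ^ n * e) := by
        rw [h.c_mul_x_pow, mul_assoc ((-x) ^ n), h.c_mul_c, h.e_mul_e]
        noncomm_ring
    _ = 0 := by
        rw [h.e_mul_neg_x_pow_mul_e]
        exact h.e_mul_c_mul_mul_e (((Commute.neg_one_left e).pow_left n).mul_left (h.commute_ω_e n))
          (((Commute.neg_one_left c).pow_left n).mul_left (h.commute_ω_c n))
  have hq : e * x ^ (n + 1) * c * e = -(e * x ^ (n + 1) * c * e) := by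
    calc e * x ^ (n + 1) * c * e = -(e * (xb * x ^ n) * c * e) := by
          rw [pow_succ', ← mul_assoc, h.e_mul_x]; noncomm_ring
    _ = -(e * x ^ n * xb * c * e + e * x ^ n * (e - c * e * c) * c * e
          - e * (e - c * e * c) * x ^ n * c * e) := by
          rw [h.xb_mul_x_pow]; noncomm_ring
    _ = _ := by rw [hxb, hright, hleft, add_zero, sub_zero]
  refine h2 (?_ : (2 : A) * (e * x ^ (n + 1) * c * e) = 2 * 0)
  rw [mul_zero, two_mul, ← eq_neg_iff_add_eq_zero]
  exact hq

theorem c_mul_e_mul_c_mul_x_pow_mul_e (h : BCaffRelations e x xb c ω ωb)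
    (h2 : IsLeftRegular (2 : A)) (n : ℕ) : c * e * c * (x ^ n * e) = 0 := by
  calc c * e * c * (x ^ n * e) = c * (e * (c * x ^ n) * e) := by noncomm_ring
  _ = c * (e * (-x) ^ n * c * e) := by rw [h.c_mul_x_pow]; noncomm_ring
  _ = 0 := by
      rcases neg_one_pow_eq_or A n with h1 | h1 <;>
        simp [neg_pow, h1, h.e_mul_x_pow_mul_c_mul_e h2 n]

theorem z_mul_e (h : BCaffRelations e x xb c ω ωb) (h2 : IsLeftRegular (2 : A)) :
    (xb + (e - c * e * c)) * e = -x * e := by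
  calc (xb + (e - c * e * c)) * e = xb * e + e * e - c * e * c * (x ^ 0 * e) := by
        rw [pow_zero, one_mul]; noncomm_ring
  _ = -x * e := by
      rw [h.xb_mul_e, h.e_mul_e, h.c_mul_e_mul_c_mul_x_pow_mul_e h2]; noncomm_ring

theorem z_pow_mul_e (h : BCaffRelations e x xb c ω ωb) (h2 : IsLeftRegular (2 : A)) (n : ℕ) :
    (xb + (e - c * e * c)) ^ n * e = (-x) ^ n * e := by
  induction n with
  | zero => rw [pow_zero, pow_zero]
  | succ n ih =>
    rw [pow_succ, mul_assoc, h.z_mul_e h2, ← mul_assoc, ← (h.commute_x.neg_left.pow_right n).eq,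
      mul_assoc, ih, ← mul_assoc, ← pow_succ']

theorem e_mul_z_pow_mul_e (h : BCaffRelations e x xb c ω ωb) (h2 : IsLeftRegular (2 : A))
    (n : ℕ) : e * (xb + (e - c * e * c)) ^ n * e = (-1) ^ n * ω n * e := by
  rw [mul_assoc, h.z_pow_mul_e h2, ← mul_assoc, h.e_mul_neg_x_pow_mul_e]

theorem xb_mul_z_pow_mul_e (h : BCaffRelations e x xb c ω ωb) (h2 : IsLeftRegular (2 : A))
    (n : ℕ) : xb * (xb + (e - c * e * c)) ^ n * e
      = (xb + (e - c * e * c)) ^ (n + 1) * e - (-1) ^ n * ω n * e := by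
  rw [← h.e_mul_z_pow_mul_e h2, pow_succ']
  generalize hz : xb + (e - c * e * c) = z
  have hxb : xb = z - e + c * e * c := by rw [← hz]; abel
  calc xb * z ^ n * e = z * z ^ n * e - e * z ^ n * e + c * e * c * (z ^ n * e) := by
        rw [hxb]; noncomm_ring
  _ = _ := by
      rw [← hz, h.z_pow_mul_e h2, neg_pow, mul_assoc _ (x ^ n), ← mul_assoc (c * e * c),
        ← ((Commute.neg_one_left _).pow_left n).eq, mul_assoc _ (c * e * c),
        h.c_mul_e_mul_c_mul_x_pow_mul_e h2, mul_zero, add_zero]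

theorem ωb_mul_e (h : BCaffRelations e x xb c ω ωb) (h2 : IsLeftRegular (2 : A)) (k : ℕ) :
    ωb k * e = (-1) ^ k * ω k * e
      - ∑ i ∈ range k, ωb i * ((-1) ^ (k - 1 - i) * ω (k - 1 - i)) * e := by
  have hθ : ∀ {a : A}, (∀ j, Commute (ω j) a) → ∀ j, Commute ((-1) ^ j * ω j) a :=
    fun hω j => ((Commute.neg_one_left _).pow_left j).mul_left (hω j)
  have := e_mul_pow_mul_pow_mul_e h.e_mul_xb_pow_mul_e (h.e_mul_z_pow_mul_e h2)
    (h.xb_mul_z_pow_mul_e h2) (hθ h.commute_ω_xb) (hθ h.commute_ω_e)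
    (fun j i => hθ (h.commute_ω_ωb · i) j) k 0
  rwa [pow_zero, mul_one, h.e_mul_xb_pow_mul_e, add_zero] at this

end BCaffRelations

namespace AWBC

variable {R A : Type} [CommRing R] [Ring A] [Algebra R A] {r t : ℕ} {ω1 : R}

theorem e_mul_x1_pow_mul_e (d : AWBC R A r t ω1) (m : ℕ) :
    d.e * d.x1 ^ m * d.e = d.om m * d.e := by
  rcases Nat.even_or_odd' m with ⟨k, rfl | rfl⟩
  · rw [d.om_even, zero_mul]
    rcases k with _ | k
    · rw [pow_zero, mul_one, d.e_sq]
    · exact d.e_xeven (k + 1) k.succ_pos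
  · exact d.e_xodd k

theorem e_mul_xb1_pow_mul_e (d : AWBC R A r t ω1) (m : ℕ) :
    d.e * d.xb1 ^ m * d.e = d.omb m * d.e := by
  rcases m with _ | m
  · rw [pow_zero, mul_one, d.e_sq, d.omb_zero, zero_mul]
  · exact d.e_xb (m + 1) m.succ_pos

theorem bcaffRelations (d : AWBC R A r t ω1) (hr : 0 < r) :
    BCaffRelations d.e d.x1 d.xb1 (d.c ⟨0, hr⟩) d.om d.omb where
  e_mul_e := d.e_sq
  c_mul_c := d.c_sq _
  x_mul_c := d.x1_c1 hr
  commute_xb_c := d.xb1_c_comm _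
  e_mul_add := d.e_xsum
  add_mul_e := d.xsum_e
  e_mul_c_mul_e := d.e_c_e hr
  x_mixed := d.x_mixed hr
  e_mul_x_pow_mul_e := d.e_mul_x1_pow_mul_e
  e_mul_xb_pow_mul_e := d.e_mul_xb1_pow_mul_e
  commute_ω_e k := (d.om_comm k).2.2.2.2.1
  commute_ω_c k := (d.om_comm k).2.2.1 _
  commute_ω_xb k := (d.om_comm k).2.2.2.2.2.2.1
  commute_ω_ωb k := (d.om_comm k).2.2.2.2.2.2.2.2

theorem neg_one_pow_mul_om (d : AWBC R A r t ω1) (k : ℕ) : (-1) ^ k * d.om k = -d.om k := by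
  rcases Nat.even_or_odd k with hk | hk
  · obtain ⟨m, rfl⟩ := hk
    rw [← two_mul, d.om_even, mul_zero, neg_zero]
  · rw [hk.neg_one_pow, neg_one_mul]

def omegaSubalgebra (d : AWBC R A r t ω1) : Subalgebra R A :=
  Algebra.adjoin R
    ({x : A | ∃ n : ℕ, 1 ≤ n ∧ x = d.om (2 * n + 1)} ∪ {x : A | ∃ k : ℕ, 1 ≤ k ∧ x = d.omb k})

theorem om_mem_omegaSubalgebra (d : AWBC R A r t ω1) (k : ℕ) : d.om k ∈ d.omegaSubalgebra := by
  rcases Nat.even_or_odd' k with ⟨n, rfl | rfl⟩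
  · rw [d.om_even]
    exact zero_mem _
  · rcases n with _ | n
    · rw [d.om_one]
      exact Subalgebra.algebraMap_mem _ _
    · exact Algebra.subset_adjoin (Or.inl ⟨n + 1, n.succ_pos, rfl⟩)

theorem omb_mem_omegaSubalgebra (d : AWBC R A r t ω1) (k : ℕ) :
    d.omb k ∈ d.omegaSubalgebra := by
  rcases k with _ | k
  · rw [d.omb_zero]
    exact zero_mem _
  · exact Algebra.subset_adjoin (Or.inr ⟨k + 1, k.succ_pos, rfl⟩)

theorem omb_eq_neg_om_add_sum (d : AWBC R A r t ω1) (hr : 0 < r) (h2 : IsLeftRegular (2 : A))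
    (htf : ∀ h ∈ d.omegaSubalgebra, h * d.e = 0 → h = 0) (k : ℕ) :
    d.omb k = -d.om k + ∑ i ∈ range k, d.omb i * d.om (k - 1 - i) := by
  have hrel := (d.bcaffRelations hr).ωb_mul_e h2 k
  simp only [neg_one_pow_mul_om, mul_neg, neg_mul, sum_neg_distrib, sub_neg_eq_add] at hrel
  rw [← sub_eq_zero]
  refine htf _ (sub_mem (d.omb_mem_omegaSubalgebra k) (add_mem
    (neg_mem (d.om_mem_omegaSubalgebra k)) (Subalgebra.sum_mem _ fun i _ =>
      mul_mem (d.omb_mem_omegaSubalgebra i) (d.om_mem_omegaSubalgebra _)))) ?_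
  rw [sub_mul, add_mul, sum_mul, hrel, neg_mul, sub_self]

end AWBC

theorem statement7_general (R A : Type) [CommRing R] [Ring A] [Algebra R A]
    (h2 : IsUnit (2 : R)) (r t : ℕ) (hr : 1 ≤ r) (ω1 : R)
    (d : AWBC R A r t ω1)
    (htf : ∀ h ∈ Algebra.adjoin R
        ({x : A | ∃ n : ℕ, 1 ≤ n ∧ x = d.om (2 * n + 1)} ∪
          {x : A | ∃ k : ℕ, 1 ≤ k ∧ x = d.omb k}),
      h * d.e = 0 → h = 0) :
    (∀ n : ℕ, d.omb (2 * n + 1)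
      = ∑ j ∈ Finset.range (n + 1), acoef d.om n j * d.om (2 * j + 1)) ∧
    (∀ n : ℕ, d.omb (2 * n) = 0) ∧
    d.omb 1 = -algebraMap R A ω1 ∧
    (∀ n j : ℕ, j ≤ n → acoef d.om n j ∈
      Algebra.adjoin R {x : A | ∃ l : ℕ, 1 ≤ l ∧ l + 1 ≤ n ∧ x = d.om (2 * l + 1)}) := by
  have h2A : IsLeftRegular (2 : A) := by
    simpa only [map_ofNat] using (h2.map (algebraMap R A)).isRegular.left
  have hrec := d.omb_eq_neg_om_add_sum hr h2A htf
  have hodd := two_mul_add_one_eq_acoefSum_of_recursion d.om_even hrec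
  refine ⟨hodd, two_mul_eq_zero_of_recursion d.om_even hrec, ?_,
    fun n j _ => acoef_mem_adjoin d.om d.om_one n j⟩
  simpa [acoefSum, acoef, d.om_one] using hodd 0

/-- Corollary 3.5: if `e_1` is torsion-free over the subring
`R[ω_3, ω_5, …, ω̄_1, ω̄_2, …]`, then `ω̄_{2n+1} = ∑_{i=0}^n a_{2n+1,i} ω_{2i+1}` and
`ω̄_{2n} = 0`; in particular `ω̄_1 = -ω_1`. -/
theorem statement7 (R A : Type) [CommRing R] [IsDomain R] [Ring A] [Algebra R A]
    (h2 : IsUnit (2 : R)) (r t : ℕ) (hr : 1 ≤ r) (ht : 1 ≤ t) (ω1 : R)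
    (d : AWBC R A r t ω1) (hu : d.IsUniversal)
    (htf : ∀ h ∈ Algebra.adjoin R
        ({x : A | ∃ n : ℕ, 1 ≤ n ∧ x = d.om (2 * n + 1)} ∪
          {x : A | ∃ k : ℕ, 1 ≤ k ∧ x = d.omb k}),
      h * d.e = 0 → h = 0) :
    (∀ n : ℕ, d.omb (2 * n + 1)
      = ∑ j ∈ Finset.range (n + 1), acoef d.om n j * d.om (2 * j + 1)) ∧
    (∀ n : ℕ, d.omb (2 * n) = 0) ∧
    d.omb 1 = -algebraMap R A ω1 ∧
    (∀ n j : ℕ, j ≤ n → acoef d.om n j ∈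
      Algebra.adjoin R {x : A | ∃ l : ℕ, 1 ≤ l ∧ l + 1 ≤ n ∧ x = d.om (2 * l + 1)}) :=
  statement7_general R A h2 r t hr ω1 d htf
end
end

section
/- Let F be an algebraically closed field of characteristic different from 2, let M be a finite dimensional simple B̃C_{r,t}-module over F, and let f(x) = x^k ∏_{i=1}^{n} (x − u_i), with all u_i nonzero in F, be the minimal polynomial of the action of x_1 on M. Then there exists ε ∈ {−1, 1} such that c_1 f(x_1) = ε f(x_1) c_1 in B̃C_{r,t}; equivalently, f(−x) = ± f(x), so the nonzero roots of f occur in pairs ±u. -/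
open Polynomial

noncomputable section

/-! Conjugating by `c_1` turns `f(x_1)` into `f(-x_1)`, so `f(-x)` also annihilates `M` and is
divisible by the minimal polynomial `f`. Having the same degree, `f(-x)` is a scalar multiple of
`f`, and comparing leading coefficients gives the scalar `(-1)^{deg f}`. -/

theorem SemiconjBy.aeval {R B : Type*} [CommSemiring R] [Semiring B] [Algebra R B] {c a b : B}
    (h : SemiconjBy c a b) (p : R[X]) : SemiconjBy c (aeval a p) (aeval b p) := by
  induction p using Polynomial.induction_on' with
  | add p q hp hq => simpa only [map_add] using hp.add_right hq
  | monomial n s =>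
    simp only [aeval_monomial]
    exact SemiconjBy.mul_right (Algebra.commutes s c).symm (h.pow_right n)

theorem Polynomial.comp_neg_X_eq_of_dvd {R : Type*} [CommRing R] [IsDomain R] {f : R[X]}
    (h : f ∣ f.comp (-X)) : f.comp (-X) = C ((-1) ^ f.natDegree) * f := by
  have hdeg : (f.comp (-X)).natDegree = f.natDegree := by simp [natDegree_comp]
  refine (eq_of_dvd_of_natDegree_le_of_leadingCoeff ?_ ?_ ?_).symm
  · exact (isUnit_C.mpr (isUnit_neg_one.pow _)).mul_left_dvd.mpr h
  · rw [hdeg, natDegree_C_mul (isUnit_neg_one.pow f.natDegree).ne_zero]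
  · rw [leadingCoeff_mul, leadingCoeff_C, comp_neg_X_leadingCoeff_eq]

theorem minpoly.dvd_comp_neg_X_of_semiconjBy {K B : Type*} [Field K] [Ring B] [Algebra K B]
    {c a : B} (hc : IsUnit c) (h : SemiconjBy c a (-a)) :
    minpoly K a ∣ (minpoly K a).comp (-X) := by
  refine minpoly.dvd K a ?_
  have hconj := h.aeval (minpoly K a)
  rw [minpoly.aeval, SemiconjBy, mul_zero, eq_comm, hc.mul_left_eq_zero] at hconj
  simpa [aeval_comp] using hconj

theorem WBC.cn_one_s17 {R A : Type} [CommRing R] [Ring A] [Algebra R A] {r t : ℕ}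
    (d : WBC R A r t) (h : 0 < r) : d.cn 1 = d.c ⟨0, h⟩ := by
  simp [WBC.cn, h]

theorem AWBC.semiconjBy_c_x1 {R A : Type} [CommRing R] [Ring A] [Algebra R A] {r t : ℕ} {ω1 : R}
    (d : AWBC R A r t ω1) (h : 0 < r) : SemiconjBy (d.c ⟨0, h⟩) d.x1 (-d.x1) := by
  rw [SemiconjBy, neg_mul, d.x1_c1 h, neg_neg]

theorem WBC.isUnit_c {R A : Type} [CommRing R] [Ring A] [Algebra R A] {r t : ℕ}
    (d : WBC R A r t) (i : Fin r) : IsUnit (d.c i) :=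
  ⟨⟨d.c i, -d.c i, by rw [mul_neg, d.c_sq, neg_neg], by rw [neg_mul, d.c_sq, neg_neg]⟩, rfl⟩

theorem statement17_general (F A : Type) [Field F] [Ring A] [Algebra F A] (r t : ℕ) (hr : 1 ≤ r)
    (ω : ℕ → F) (d : AWBC F A r t (ω 1))
    (M : Type) [AddCommGroup M] [Module F M] [Module A M] [IsScalarTower F A M]
    (T : Module.End F M) (hT : ∀ v : M, T v = d.x1 • v)
    (f : Polynomial F)
    (hmin : minpoly F T = f) :
    ∃ ε : F, (ε = 1 ∨ ε = -1) ∧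
      d.toWBC.cn 1 * Polynomial.aeval d.x1 f
        = ε • (Polynomial.aeval d.x1 f * d.toWBC.cn 1) ∧
      (f.comp (-Polynomial.X) = f ∨ f.comp (-Polynomial.X) = -f) := by
  let ρ : A →ₐ[F] Module.End F M := Algebra.lsmul F F M
  have hTρ : T = ρ d.x1 := LinearMap.ext hT
  have hc : IsUnit (ρ (d.c ⟨0, hr⟩)) := (d.isUnit_c _).map ρ
  have hcT : SemiconjBy (ρ (d.c ⟨0, hr⟩)) T (-T) := by
    simpa [hTρ] using (d.semiconjBy_c_x1 hr).map ρ
  have hsymm : f.comp (-X) = C ((-1) ^ f.natDegree) * f :=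
    hmin ▸ Polynomial.comp_neg_X_eq_of_dvd (minpoly.dvd_comp_neg_X_of_semiconjBy hc hcT)
  refine ⟨_, neg_one_pow_eq_or F f.natDegree, ?_, ?_⟩
  · rw [d.cn_one_s17 hr, (d.semiconjBy_c_x1 hr).aeval f, ← aeval_X (R := F) d.x1, ← map_neg,
      ← aeval_comp, aeval_X, hsymm, map_mul, aeval_C, Algebra.smul_def, mul_assoc]
  · rcases neg_one_pow_eq_or F f.natDegree with h | h <;> simp [hsymm, h]

/-- Lemma 6.1: if `M` is a finite dimensional simple `B̃C_{r,t}`-module over an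
algebraically closed field `F` of characteristic `≠ 2` and `f(x) = x^k ∏ (x - u_i)` (all
`u_i ≠ 0`) is the minimal polynomial of the action of `x_1` on `M`, then
`c_1 f(x_1) = ε f(x_1) c_1` for some `ε ∈ {-1,1}`; equivalently `f(-x) = ± f(x)`. -/
theorem statement17 (F A : Type) [Field F] [IsAlgClosed F] [Ring A] [Algebra F A]
    (hchar : (2 : F) ≠ 0) (r t : ℕ) (hr : 1 ≤ r) (ht : 1 ≤ t)
    (ω : ℕ → F) (hωe : ∀ n, ω (2 * n) = 0)
    (d : AWBC F A r t (ω 1)) (hu : d.IsSpecUniversal ω)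
    (M : Type) [AddCommGroup M] [Module F M] [Module A M] [IsScalarTower F A M]
    [FiniteDimensional F M] (hsimple : IsSimpleModule A M)
    (T : Module.End F M) (hT : ∀ v : M, T v = d.x1 • v)
    (k n : ℕ) (u : Fin n → F) (hu0 : ∀ i, u i ≠ 0)
    (f : Polynomial F)
    (hf : f = Polynomial.X ^ k * ∏ i, (Polynomial.X - Polynomial.C (u i)))
    (hmin : minpoly F T = f) :
    ∃ ε : F, (ε = 1 ∨ ε = -1) ∧
      d.toWBC.cn 1 * Polynomial.aeval d.x1 f
        = ε • (Polynomial.aeval d.x1 f * d.toWBC.cn 1) ∧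
      (f.comp (-Polynomial.X) = f ∨ f.comp (-Polynomial.X) = -f) :=
  statement17_general F A r t hr ω d M T hT f hmin
end
end
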